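/- arXiv:2111.11994 — 5 statements merged into one kernel-verified Lean document; each statement's English description precedes it below -/
import Mathlib

section
/- Vizing's theorem: for every finite simple graph G, the edge chromatic number χ'(G) satisfies χ'(G) ≤ Δ(G) + 1. -/
/-!
Colour the edges one at a time. To colour an uncoloured edge `xy`, give every vertex `v` a colour
`μ v` missing at it (`Δ + 1` colours leave one) and follow the fan `y = f 0, f 1, …` in which
`x (f (i + 1))` has colour `μ (f i)`. If the fan stops at a colour missing at `x`, shifting every
colour of the fan one step towards `y` colours `xy`. Otherwise `μ (f j) = μ (f k) = d` for some
`j < k`. With `c` missing at `x`, the graph of `c`- and `d`-coloured edges has maximum degree `2`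
and `x`, `f j`, `f k` have degree at most `1` in it; since a connected graph of maximum degree `2`
has at most two such vertices, one of `f j`, `f k` lies in a component avoiding `x`. Swapping `c`
and `d` on that component leaves the edges at `x` alone and makes `c` missing at the end of the
fan `f 0, …, f j` or `f 0, …, f k`, to which the first case applies.
-/

open Finset

theorem Finite.exists_injOn_Iic_and_apply_succ_eq {β : Type*} [Finite β] (f : ℕ → β) :
    ∃ k, Set.InjOn f (Set.Iic k) ∧ ∃ j ≤ k, f (k + 1) = f j := by
  classical
  have hrep : ∃ n, ∃ j < n, f j = f n := by
    obtain ⟨a, b, hab, h⟩ := Finite.exists_ne_map_eq_of_infinite f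
    rcases hab.lt_or_gt with hab | hab
    · exact ⟨b, a, hab, h⟩
    · exact ⟨a, b, hab, h.symm⟩
  obtain ⟨j, hj, hfj⟩ := Nat.find_spec hrep
  obtain ⟨k, hk⟩ : ∃ k, Nat.find hrep = k + 1 := Nat.exists_eq_add_one.2 (by omega)
  refine ⟨k, fun i hi l hl h => ?_, j, by omega, by rw [← hk, hfj]⟩
  by_contra hne
  rcases Ne.lt_or_gt hne with hil | hli
  · exact Nat.find_min hrep (m := l) (by simp at hl; omega) ⟨i, hil, h⟩
  · exact Nat.find_min hrep (m := i) (by simp at hi; omega) ⟨l, hli, h.symm⟩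

namespace SimpleGraph

variable {V α : Type*}

section Degree

variable {H : SimpleGraph V}

theorem Connected.card_filter_degree_le_one_le_two [Fintype V] [DecidableRel H.Adj]
    (hH : H.Connected) (hdeg : ∀ v, H.degree v ≤ 2) : #{v | H.degree v ≤ 1} ≤ 2 := by
  have htree := hH.card_vert_le_card_edgeSet_add_one
  rw [Nat.card_eq_fintype_card, Nat.card_eq_fintype_card, ← edgeFinset_card] at htree
  have hsum : ∑ v, H.degree v + #{v | H.degree v ≤ 1} ≤ 2 * Fintype.card V :=
    calc ∑ v, H.degree v + #{v | H.degree v ≤ 1}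
        = ∑ v, (H.degree v + if H.degree v ≤ 1 then 1 else 0) := by
          rw [sum_add_distrib, card_filter]
      _ ≤ ∑ _ : V, 2 := sum_le_sum fun v _ => by have := hdeg v; split_ifs <;> omega
      _ = 2 * Fintype.card V := by rw [sum_const, card_univ, smul_eq_mul, mul_comm]
  have := H.sum_degrees_eq_twice_card_edges
  omega

theorem Reachable.eq_or_eq_or_eq_of_degree_le_one [Fintype V] [DecidableRel H.Adj]
    (hdeg : ∀ v, H.degree v ≤ 2) {u v w : V} (huv : H.Reachable u v) (huw : H.Reachable u w)
    (hu : H.degree u ≤ 1) (hv : H.degree v ≤ 1) (hw : H.degree w ≤ 1) :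
    u = v ∨ u = w ∨ v = w := by
  classical
  set S : Set V := (H.connectedComponentMk u).supp
  have hconn : (H.induce S).Connected := (H.connectedComponentMk u).connected_toSimpleGraph
  have hmem : ∀ {z}, H.Reachable u z → z ∈ S := fun h => ConnectedComponent.eq.2 h.symm
  have hdegS : ∀ z : S, (H.induce S).degree z = H.degree z := fun z =>
    degree_induce_of_neighborSet_subset fun z' hz' =>
      ((ConnectedComponent.connectedComponentMk_eq_of_adj hz').symm.trans z.2 :)
  have hcard := hconn.card_filter_degree_le_one_le_two fun z => (hdegS z).trans_le (hdeg z)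
  by_contra! hne
  obtain ⟨huv', huw', hvw'⟩ := hne
  refine hcard.not_gt (two_lt_card.2 ⟨⟨u, hmem .rfl⟩, ?_, ⟨v, hmem huv⟩, ?_, ⟨w, hmem huw⟩, ?_,
    by simpa using huv', by simpa using huw', by simpa using hvw'⟩) <;> simpa [hdegS]

end Degree

variable {G : SimpleGraph V}

variable (G α) in
structure PartialEdgeColoring where
  color : V → V → Option α
  symm : ∀ u v, color u v = color v u
  adj : ∀ {u v}, color u v ≠ none → G.Adj u v
  proper : ∀ {u v w a}, color u v = some a → color u w = some a → v = w

namespace PartialEdgeColoring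

variable (C : G.PartialEdgeColoring α)

def empty : G.PartialEdgeColoring α where
  color _ _ := none
  symm _ _ := rfl
  adj h := absurd rfl h
  proper h := nomatch h

def Free (v : V) (a : α) : Prop := ∀ w, C.color v w ≠ some a

theorem exists_free [Fintype V] [DecidableRel G.Adj] [Fintype α]
    (hα : G.maxDegree < Fintype.card α) (v : V) : ∃ a, C.Free v a := by
  classical
  by_contra! h
  have hsub : univ.map .some ⊆ (G.neighborFinset v).image (C.color v) := by
    intro o ho
    obtain ⟨a, -, rfl⟩ := mem_map.1 ho
    obtain ⟨w, hw⟩ : ∃ w, C.color v w = some a := by simpa [Free] using h a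
    exact mem_image.2 ⟨w, (mem_neighborFinset _ _ _).2 (C.adj (by simp [hw])), hw⟩
  have := (card_le_card hsub).trans card_image_le
  rw [card_map, card_univ, card_neighborFinset_eq_degree] at this
  exact (hα.trans_le this).not_ge (G.degree_le_maxDegree v)

theorem exists_recolor (x : V) (σ : V → Option α) (hadj : ∀ {v}, σ v ≠ none → G.Adj x v)
    (hinj : ∀ {v w a}, σ v = some a → σ w = some a → v = w)
    (hfree : ∀ {v w a}, σ v = some a → w ≠ x → C.color v w ≠ some a) :
    ∃ C' : G.PartialEdgeColoring α,
      (∀ v, C'.color x v = σ v) ∧ ∀ u v, u ≠ x → v ≠ x → C'.color u v = C.color u v := by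
  classical
  refine ⟨⟨fun u v => if u = x then σ v else if v = x then σ u else C.color u v, ?_, ?_, ?_⟩,
    fun v => if_pos rfl, fun u v hu hv => by simp [hu, hv]⟩
  · intro u v
    by_cases hu : u = x <;> by_cases hv : v = x <;> simp [hu, hv, C.symm u v]
  · intro u v h
    by_cases hu : u = x
    · subst hu; simp_all
    by_cases hv : v = x
    · subst hv; simp only [hu, if_true, if_false] at h; exact (hadj h).symm
    simp only [hu, hv, if_false] at h
    exact C.adj h
  · intro u v w a hv hw
    by_cases hu : u = x
    · simp only [hu, if_true] at hv hw; exact hinj hv hw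
    simp only [hu, if_false] at hv hw
    by_cases hvx : v = x <;> by_cases hwx : w = x <;>
      simp only [hvx, hwx, if_true, if_false] at hv hw
    · exact hvx.trans hwx.symm
    · exact absurd hw (hfree hv hwx)
    · exact absurd hv (hfree hw hvx)
    · exact C.proper hv hw

section Kempe

def kempeGraph (c d : α) : SimpleGraph V where
  Adj u v := C.color u v = some c ∨ C.color u v = some d
  symm := ⟨fun u v => by simp only [C.symm u v, imp_self]⟩
  loopless := ⟨fun v h => G.irrefl (C.adj (u := v) (v := v) (by rcases h with h | h <;> simp [h]))⟩

variable {C} {c d : α}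

@[simp]
theorem kempeGraph_adj {u v : V} :
    (C.kempeGraph c d).Adj u v ↔ C.color u v = some c ∨ C.color u v = some d :=
  Iff.rfl

theorem card_color_eq_some_le_one [Fintype V] [DecidableEq α] (v : V) (a : α) :
    #{w | C.color v w = some a} ≤ 1 :=
  card_le_one.2 fun _ hw _ hw' => C.proper (mem_filter.1 hw).2 (mem_filter.1 hw').2

theorem degree_kempeGraph_le [Fintype V] [DecidableEq α] [DecidableRel (C.kempeGraph c d).Adj]
    (v : V) :
    (C.kempeGraph c d).degree v ≤ #{w | C.color v w = some c} + #{w | C.color v w = some d} := by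
  classical
  rw [← card_neighborFinset_eq_degree]
  exact (card_le_card fun w hw => by simpa using hw).trans (card_union_le _ _)

theorem degree_kempeGraph_le_two [Fintype V] [DecidableRel (C.kempeGraph c d).Adj] (v : V) :
    (C.kempeGraph c d).degree v ≤ 2 := by
  classical
  exact (degree_kempeGraph_le v).trans
    (add_le_add (card_color_eq_some_le_one v c) (card_color_eq_some_le_one v d))

theorem degree_kempeGraph_le_one [Fintype V] [DecidableRel (C.kempeGraph c d).Adj] {v : V}
    (hv : C.Free v c ∨ C.Free v d) : (C.kempeGraph c d).degree v ≤ 1 := by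
  classical
  have h := degree_kempeGraph_le (C := C) (c := c) (d := d) v
  rcases hv with hv | hv
  · rw [filter_false_of_mem fun w _ => hv w, card_empty, zero_add] at h
    exact h.trans (card_color_eq_some_le_one v d)
  · rw [filter_false_of_mem fun w _ => hv w, card_empty, add_zero] at h
    exact h.trans (card_color_eq_some_le_one v c)

variable [DecidableEq α]

theorem map_swap_color_of_not_adj {u v : V} (h : ¬(C.kempeGraph c d).Adj u v) :
    (C.color u v).map (Equiv.swap c d) = C.color u v := by
  rw [kempeGraph_adj, not_or] at h
  cases hc : C.color u v with
  | none => rfl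
  | some a => simp_all [Equiv.swap_apply_of_ne_of_ne]

variable (C) in
open Classical in
noncomputable def kempeSwap (K : Set V) (hK : ∀ {u v}, u ∈ K → (C.kempeGraph c d).Adj u v → v ∈ K) :
    G.PartialEdgeColoring α where
  color u v := if u ∈ K then (C.color u v).map (Equiv.swap c d) else C.color u v
  symm u v := by
    by_cases hu : u ∈ K <;> by_cases hv : v ∈ K <;> simp only [hu, hv, if_true, if_false]
    · rw [C.symm]
    · rw [map_swap_color_of_not_adj fun h => hv (hK hu h), C.symm]
    · rw [map_swap_color_of_not_adj fun h => hu (hK hv h), C.symm]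
    · exact C.symm u v
  adj h := C.adj (by split_ifs at h <;> simpa using h)
  proper {u v w a} hv hw := by
    split_ifs at hv hw
    · obtain ⟨b, hb, -⟩ := Option.map_eq_some_iff.1 hv
      exact C.proper hb (Option.map_injective (Equiv.injective _) (hv.trans hw.symm) ▸ hb)
    · exact C.proper hv hw

variable {K : Set V} {hK : ∀ {u v}, u ∈ K → (C.kempeGraph c d).Adj u v → v ∈ K}

theorem kempeSwap_color_of_mem {u : V} (hu : u ∈ K) (v : V) :
    (C.kempeSwap K hK).color u v = (C.color u v).map (Equiv.swap c d) := if_pos hu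

theorem kempeSwap_color_of_notMem {u : V} (hu : u ∉ K) (v : V) :
    (C.kempeSwap K hK).color u v = C.color u v := if_neg hu

theorem kempeSwap_color_eq_none_iff (u v : V) :
    (C.kempeSwap K hK).color u v = none ↔ C.color u v = none := by
  by_cases hu : u ∈ K
  · simp [kempeSwap_color_of_mem hu]
  · simp [kempeSwap_color_of_notMem hu]

theorem free_kempeSwap_iff_of_mem {u : V} (hu : u ∈ K) (a : α) :
    (C.kempeSwap K hK).Free u a ↔ C.Free u (Equiv.swap c d a) := by
  simp [Free, kempeSwap_color_of_mem hu, Equiv.swap_apply_eq_iff]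

theorem free_kempeSwap_iff_of_notMem {u : V} (hu : u ∉ K) (a : α) :
    (C.kempeSwap K hK).Free u a ↔ C.Free u a := by
  simp [Free, kempeSwap_color_of_notMem hu]

end Kempe

structure IsFan (x : V) (μ : V → α) (f : ℕ → V) (k : ℕ) : Prop where
  injOn : Set.InjOn f (Set.Iic k)
  adj : ∀ i ≤ k, G.Adj x (f i)
  color_succ : ∀ i < k, C.color x (f (i + 1)) = some (μ (f i))
  free : ∀ i ≤ k, C.Free (f i) (μ (f i))

variable {C} {x : V} {μ : V → α} {f : ℕ → V} {k : ℕ}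

theorem IsFan.mono (hF : C.IsFan x μ f k) {i : ℕ} (hik : i ≤ k) : C.IsFan x μ f i where
  injOn := hF.injOn.mono (Set.Iic_subset_Iic.2 hik)
  adj j hj := hF.adj j (hj.trans hik)
  color_succ j hj := hF.color_succ j (hj.trans_le hik)
  free j hj := hF.free j (hj.trans hik)

theorem IsFan.eq_of_color_eq (hF : C.IsFan x μ f k) {i l : ℕ} (hi : i < k) (hl : l < k)
    (h : μ (f i) = μ (f l)) : i = l := by
  have := C.proper (hF.color_succ i hi) (h ▸ hF.color_succ l hl)
  exact Nat.succ_injective (hF.injOn (Set.mem_Iic.2 hi) (Set.mem_Iic.2 hl) this)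

variable (C) in
open Classical in
noncomputable def fanNext (x : V) (μ : V → α) (v : V) : V :=
  if h : ∃ w, C.color x w = some (μ v) then h.choose else v

theorem color_fanNext {v : V} (h : ¬C.Free x (μ v)) :
    C.color x (C.fanNext x μ v) = some (μ v) := by
  have h' : ∃ w, C.color x w = some (μ v) := by simpa [Free] using h
  rw [fanNext, dif_pos h']
  exact h'.choose_spec

theorem fanNext_of_free {v : V} (h : C.Free x (μ v)) : C.fanNext x μ v = v :=
  dif_neg fun ⟨w, hw⟩ => h w hw

theorem exists_isFan [Finite V] (hμ : ∀ v, C.Free v (μ v)) {y : V} (hxy : G.Adj x y)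
    (hy : C.color x y = none) :
    ∃ f k, f 0 = y ∧ C.IsFan x μ f k ∧ (C.Free x (μ (f k)) ∨ ∃ j < k, μ (f j) = μ (f k)) := by
  set f := fun n => (C.fanNext x μ)^[n] y
  have hf : ∀ n, f (n + 1) = C.fanNext x μ (f n) := fun n =>
    Function.iterate_succ_apply' _ n y
  have hmoved : ∀ n, f (n + 1) ≠ f n → C.color x (f (n + 1)) = some (μ (f n)) := by
    intro n h
    rw [hf] at h ⊢
    exact color_fanNext fun hfree => h (fanNext_of_free hfree)
  have hadj : ∀ n, G.Adj x (f n) := by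
    intro n
    induction n with
    | zero => exact hxy
    | succ n ih =>
      by_cases h : f (n + 1) = f n
      · rwa [h]
      · exact C.adj (by simp [hmoved n h])
  obtain ⟨k, hinj, j, hjk, hrep⟩ := Finite.exists_injOn_Iic_and_apply_succ_eq f
  have hsucc : ∀ i < k, C.color x (f (i + 1)) = some (μ (f i)) := fun i hi =>
    hmoved i (hinj.ne (Set.mem_Iic.2 hi) (Set.mem_Iic.2 hi.le) (by omega))
  refine ⟨f, k, rfl, ⟨hinj, fun i _ => hadj i, hsucc, fun i _ => hμ _⟩, ?_⟩
  rcases hjk.lt_or_eq with hjk | rfl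
  · right
    have hcol := hmoved k (hrep ▸ hinj.ne (Set.mem_Iic.2 hjk.le) Set.self_mem_Iic hjk.ne)
    rw [hrep] at hcol
    obtain ⟨i, rfl⟩ : ∃ i, j = i + 1 := Nat.exists_eq_add_one.2 <| Nat.pos_of_ne_zero <| by
      rintro rfl
      simp [f, hy] at hcol
    exact ⟨i, by omega, Option.some_injective _ ((hsucc i (by omega)).symm.trans hcol)⟩
  · left
    by_contra hfree
    have hcol := color_fanNext hfree
    rw [← hf, hrep] at hcol
    exact hμ (f j) x (by rw [C.symm]; exact hcol)

theorem IsFan.mem_image_of_color_eq (hF : C.IsFan x μ f k) (hx : C.Free x (μ (f k))) {i : ℕ}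
    (hi : i ≤ k) {w : V} (hw : C.color x w = some (μ (f i))) : w ∈ f '' Set.Iic k := by
  rcases hi.lt_or_eq with hi | rfl
  · exact ⟨i + 1, Set.mem_Iic.2 hi, C.proper (hF.color_succ i hi) hw⟩
  · exact absurd hw (hx w)

theorem IsFan.injOn_image (hF : C.IsFan x μ f k) (hx : C.Free x (μ (f k))) :
    Set.InjOn μ (f '' Set.Iic k) := by
  rintro _ ⟨i, hi, rfl⟩ _ ⟨l, hl, rfl⟩ h
  rcases (Set.mem_Iic.1 hi).lt_or_eq with hi | rfl <;>
    rcases (Set.mem_Iic.1 hl).lt_or_eq with hl | rfl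
  · rw [hF.eq_of_color_eq hi hl h]
  · exact absurd (h ▸ hF.color_succ i hi) (hx _)
  · exact absurd (h ▸ hF.color_succ l hl) (hx _)
  · rfl

theorem IsFan.exists_extend (hF : C.IsFan x μ f k) (hx : C.Free x (μ (f k))) :
    ∃ C' : G.PartialEdgeColoring α,
      (∀ u v, C.color u v ≠ none → C'.color u v ≠ none) ∧ C'.color x (f 0) ≠ none := by
  classical
  set F := f '' Set.Iic k
  have hused : ∀ v ∈ F, ∀ w, C.color x w = some (μ v) → w ∈ F := by
    rintro _ ⟨i, hi, rfl⟩ w hw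
    exact hF.mem_image_of_color_eq hx hi hw
  obtain ⟨C', hx', hC'⟩ := C.exists_recolor x
    (fun v => if v ∈ F then some (μ v) else C.color x v)
    (fun {v} hv => by
      split_ifs at hv with h
      · obtain ⟨i, hi, rfl⟩ := h; exact hF.adj i hi
      · exact C.adj hv)
    (fun {v w a} hv hw => by
      split_ifs at hv hw with h₁ h₂ h₂
      · exact hF.injOn_image hx h₁ h₂ (Option.some_injective _ (hv.trans hw.symm))
      · cases hv; exact absurd (hused v h₁ w hw) h₂
      · cases hw; exact absurd (hused w h₂ v hv) h₁
      · exact C.proper hv hw)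
    (fun {v w a} hv hwx hw => by
      split_ifs at hv with h
      · obtain ⟨i, hi, rfl⟩ := h; cases hv; exact hF.free i hi w hw
      · exact hwx (C.proper ((C.symm _ _).trans hv) hw).symm)
  refine ⟨C', fun u v h => ?_, by simp [hx', show f 0 ∈ F from ⟨0, by simp, rfl⟩]⟩
  by_cases hu : u = x
  · subst hu; rw [hx']; split_ifs <;> simp [h]
  by_cases hv : v = x
  · subst hv; rw [C'.symm, hx']; split_ifs <;> simp [C.symm, h]
  rwa [hC' u v hu hv]

theorem IsFan.exists_extend_of_kempeSwap [DecidableEq α] (hF : C.IsFan x μ f k) {c d : α}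
    (hc : C.Free x c) {K : Set V} (hK : ∀ {u v}, u ∈ K → (C.kempeGraph c d).Adj u v → v ∈ K)
    (hxK : x ∉ K) (hkK : f k ∈ K) (hd : C.Free (f k) d) (hμ : ∀ i < k, f i ∈ K → μ (f i) ≠ d) :
    ∃ C' : G.PartialEdgeColoring α,
      (∀ u v, C.color u v ≠ none → C'.color u v ≠ none) ∧ C'.color x (f 0) ≠ none := by
  classical
  set C₁ := C.kempeSwap K hK
  have hx₁ : ∀ v, C₁.color x v = C.color x v := kempeSwap_color_of_notMem hxK
  have hne : ∀ i < k, f i ≠ f k := fun i hi =>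
    hF.injOn.ne (Set.mem_Iic.2 hi.le) Set.self_mem_Iic hi.ne
  have hF₁ : C₁.IsFan x (Function.update μ (f k) c) f k := by
    refine ⟨hF.injOn, hF.adj, fun i hi => ?_, fun i hi => ?_⟩
    · rw [hx₁, Function.update_of_ne (hne i hi)]
      exact hF.color_succ i hi
    rcases hi.lt_or_eq with hi | rfl
    · rw [Function.update_of_ne (hne i hi)]
      have hc' : μ (f i) ≠ c := fun h => hc _ (h ▸ hF.color_succ i hi)
      by_cases hiK : f i ∈ K
      · rw [free_kempeSwap_iff_of_mem hiK, Equiv.swap_apply_of_ne_of_ne hc' (hμ i hi hiK)]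
        exact hF.free i hi.le
      · rw [free_kempeSwap_iff_of_notMem hiK]
        exact hF.free i hi.le
    · rw [Function.update_self, free_kempeSwap_iff_of_mem hkK, Equiv.swap_apply_left]
      exact hd
  obtain ⟨C', hC₁C', hC'⟩ := hF₁.exists_extend (by
    rw [Function.update_self]
    intro w
    rw [hx₁]
    exact hc w)
  exact ⟨C', fun u v h => hC₁C' u v (by rwa [Ne, kempeSwap_color_eq_none_iff]), hC'⟩

theorem IsFan.exists_extend_of_color_eq [Fintype V] (hF : C.IsFan x μ f k) {c : α}
    (hc : C.Free x c) {j : ℕ} (hj : j < k) (hjk : μ (f j) = μ (f k)) :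
    ∃ C' : G.PartialEdgeColoring α,
      (∀ u v, C.color u v ≠ none → C'.color u v ≠ none) ∧ C'.color x (f 0) ≠ none := by
  classical
  set d := μ (f k)
  set H := C.kempeGraph c d
  have hK : ∀ z, ∀ {u v}, u ∈ {w | H.Reachable z w} → H.Adj u v → v ∈ {w | H.Reachable z w} :=
    fun _ _ _ hu huv => hu.trans huv.reachable
  have hfj : C.Free (f j) d := hjk ▸ hF.free j hj.le
  have hfk : C.Free (f k) d := hF.free k le_rfl
  have hends : ¬(H.Reachable x (f j) ∧ H.Reachable x (f k)) := by
    rintro ⟨hxj, hxk⟩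
    rcases hxj.eq_or_eq_or_eq_of_degree_le_one degree_kempeGraph_le_two hxk
      (degree_kempeGraph_le_one (.inl hc)) (degree_kempeGraph_le_one (.inr hfj))
      (degree_kempeGraph_le_one (.inr hfk)) with h | h | h
    · exact (hF.adj j hj.le).ne h
    · exact (hF.adj k le_rfl).ne h
    · exact hF.injOn.ne (Set.mem_Iic.2 hj.le) Set.self_mem_Iic hj.ne h
  by_cases hxj : H.Reachable x (f j)
  · have hxk : ¬H.Reachable x (f k) := fun hxk => hends ⟨hxj, hxk⟩
    refine hF.exists_extend_of_kempeSwap hc (hK (f k)) (fun h => hxk h.symm) (.refl _) hfk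
      fun i hi hiK hid => ?_
    rcases eq_or_ne i j with rfl | hij
    · exact hxk (hxj.trans hiK.symm)
    · exact hij (hF.eq_of_color_eq hi hj (hid.trans hjk.symm))
  · refine (hF.mono hj.le).exists_extend_of_kempeSwap hc (hK (f j)) (fun h => hxj h.symm)
      (.refl _) hfj fun i hi _ hid => hi.ne ?_
    exact hF.eq_of_color_eq (hi.trans hj) hj (hid.trans hjk.symm)

section Extend

variable [Fintype V] [DecidableRel G.Adj] [Fintype α]

variable (C) in
theorem exists_extend (hα : G.maxDegree < Fintype.card α) {y : V} (hxy : G.Adj x y) :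
    ∃ C' : G.PartialEdgeColoring α,
      (∀ u v, C.color u v ≠ none → C'.color u v ≠ none) ∧ C'.color x y ≠ none := by
  by_cases hy : C.color x y = none
  · obtain ⟨c, hc⟩ := C.exists_free hα x
    choose μ hμ using C.exists_free hα
    obtain ⟨f, k, rfl, hF, hend⟩ := C.exists_isFan hμ hxy hy
    rcases hend with hk | ⟨j, hj, hjk⟩
    · exact hF.exists_extend hk
    · exact hF.exists_extend_of_color_eq hc hj hjk
  · exact ⟨C, fun _ _ => id, hy⟩

theorem exists_color_ne_none_of_adj (hα : G.maxDegree < Fintype.card α) :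
    ∃ C : G.PartialEdgeColoring α, ∀ u v, G.Adj u v → C.color u v ≠ none := by
  classical
  suffices ∀ S : Finset (V × V), ∃ C : G.PartialEdgeColoring α,
      ∀ p ∈ S, G.Adj p.1 p.2 → C.color p.1 p.2 ≠ none by
    obtain ⟨C, hC⟩ := this univ
    exact ⟨C, fun u v => hC (u, v) (mem_univ _)⟩
  intro S
  induction S using Finset.induction_on with
  | empty => exact ⟨empty, by simp⟩
  | insert p S _ ih =>
    obtain ⟨C, hC⟩ := ih
    by_cases hp : G.Adj p.1 p.2
    · obtain ⟨C', hCC', hp'⟩ := C.exists_extend hα hp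
      refine ⟨C', fun q hq hq' => ?_⟩
      rcases mem_insert.1 hq with rfl | hq
      · exact hp'
      · exact hCC' _ _ (hC q hq hq')
    · refine ⟨C, fun q hq hq' => ?_⟩
      rcases mem_insert.1 hq with rfl | hq
      · exact absurd hq' hp
      · exact hC q hq hq'

end Extend

theorem exists_edgeFinset_coloring [Fintype G.edgeSet] {C : G.PartialEdgeColoring α}
    (hC : ∀ u v, G.Adj u v → C.color u v ≠ none) :
    ∃ col : G.edgeFinset → α, ∀ e f : G.edgeFinset, e ≠ f →
      (∃ v : V, v ∈ (e : Sym2 V) ∧ v ∈ (f : Sym2 V)) → col e ≠ col f := by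
  let color : Sym2 V → Option α := Sym2.lift ⟨C.color, C.symm⟩
  have hcolor : ∀ e : G.edgeFinset, color e ≠ none := by
    rintro ⟨e, he⟩
    induction e using Sym2.ind with
    | h u v => exact hC u v (mem_edgeFinset.1 he)
  refine ⟨fun e => (color e).get (Option.isSome_iff_ne_none.2 (hcolor e)), ?_⟩
  rintro e f hef ⟨v, hve, hvf⟩ h
  obtain ⟨a, ha⟩ := Sym2.mem_iff_exists.1 hve
  obtain ⟨b, hb⟩ := Sym2.mem_iff_exists.1 hvf
  have hab : C.color v a = C.color v b := by
    simpa [color, ha, hb] using congrArg some h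
  obtain ⟨c, hc⟩ : ∃ c, C.color v a = some c :=
    Option.ne_none_iff_exists'.1 (by simpa [color, ha] using hcolor e)
  exact hef (Subtype.ext (by rw [ha, hb, C.proper hc (hab ▸ hc)]))

end PartialEdgeColoring

end SimpleGraph

theorem vizing_general {V : Type*} [Fintype V]
    (G : SimpleGraph V) [DecidableRel G.Adj] :
    ∃ C : G.edgeFinset → Fin (G.maxDegree + 1),
      ∀ e f : G.edgeFinset, e ≠ f →
        (∃ v : V, v ∈ (e : Sym2 V) ∧ v ∈ (f : Sym2 V)) → C e ≠ C f := by
  obtain ⟨C, hC⟩ := SimpleGraph.PartialEdgeColoring.exists_color_ne_none_of_adj (G := G)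
    (α := Fin (G.maxDegree + 1)) (by simp)
  exact SimpleGraph.PartialEdgeColoring.exists_edgeFinset_coloring hC

/-- Vizing's theorem: every finite simple graph has a proper edge coloring with
`Δ(G) + 1` colors, i.e. the edge chromatic number satisfies `χ'(G) ≤ Δ(G) + 1`. -/
theorem vizing {V : Type*} [Fintype V] [DecidableEq V]
    (G : SimpleGraph V) [DecidableRel G.Adj] :
    ∃ C : G.edgeFinset → Fin (G.maxDegree + 1),
      ∀ e f : G.edgeFinset, e ≠ f →
        (∃ v : V, v ∈ (e : Sym2 V) ∧ v ∈ (f : Sym2 V)) → C e ≠ C f :=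
  vizing_general G
end

section
/- For a simple graph G on n vertices, ν(G) ≥ min over integers q with 0 ≤ q < (n-1)/2 of max( (1/2)(n − D_{≤q}(G) + q − 1), q ), where D_{≤q}(G) is the number of vertices of G with degree at most q. -/
/-!
Let `k = ν(G)`. If `n ≤ 2k + 1`, then `q = 0` already works. Otherwise enlarge `G` to an
edge-maximal graph `H` with `ν(H) = k`. By Gallai's lemma the neighbourhood of every non-universal
vertex of `H` is a clique, so deleting the set `A` of universal vertices leaves a disjoint union of
cliques, and matching inside the cliques and then `A` against the leftover vertices shows that at
least `|A| + n - 2k` of these cliques are odd. If `c` is the size of the second largest odd clique,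
then `q = |A| + c - 1` works: every vertex of an odd clique other than the largest one has degree
at most `q` in `H`, hence in `G`.
-/

/-- A finset of edges of `G` that are pairwise vertex-disjoint, i.e. a matching. -/
def IsMatchingFinset {V : Type*} (G : SimpleGraph V) (M : Finset (Sym2 V)) : Prop :=
  ↑M ⊆ G.edgeSet ∧ (M : Set (Sym2 V)).Pairwise fun e f => ∀ v, v ∈ e → v ∉ f

open Finset SimpleGraph

section

variable {V : Type*} {G : SimpleGraph V} {M N : Finset (Sym2 V)} {a b x y v : V}

namespace IsMatchingFinset

lemma empty : IsMatchingFinset G ∅ := by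
  simp [IsMatchingFinset]

lemma subset (hM : IsMatchingFinset G M) (hNM : N ⊆ M) : IsMatchingFinset G N :=
  ⟨(coe_subset.2 hNM).trans hM.1, hM.2.mono (coe_subset.2 hNM)⟩

lemma adj (hM : IsMatchingFinset G M) (h : s(a, b) ∈ M) : G.Adj a b :=
  hM.1 h

lemma eq_of_mem {e f : Sym2 V} (hM : IsMatchingFinset G M) (he : e ∈ M) (hf : f ∈ M)
    (hve : v ∈ e) (hvf : v ∈ f) : e = f := by
  by_contra hne
  exact hM.2 he hf hne v hve hvf

end IsMatchingFinset

section MatchedVerts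

variable [DecidableEq V]

def matchedVerts (M : Finset (Sym2 V)) : Finset V := M.biUnion Sym2.toFinset

@[simp]
lemma mem_matchedVerts : v ∈ matchedVerts M ↔ ∃ e ∈ M, v ∈ e := by
  simp [matchedVerts]

@[simp]
lemma matchedVerts_empty : matchedVerts (∅ : Finset (Sym2 V)) = ∅ := rfl

lemma matchedVerts_insert :
    matchedVerts (insert s(a, b) M) = insert a (insert b (matchedVerts M)) := by
  simp [matchedVerts, Sym2.toFinset_mk_eq]

lemma matchedVerts_union : matchedVerts (M ∪ N) = matchedVerts M ∪ matchedVerts N :=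
  union_biUnion

lemma matchedVerts_mono (h : N ⊆ M) : matchedVerts N ⊆ matchedVerts M :=
  biUnion_subset_biUnion_of_subset_left _ h

lemma mk_notMem_of_notMem_matchedVerts (ha : a ∉ matchedVerts M) : s(a, b) ∉ M :=
  fun h => ha (mem_matchedVerts.2 ⟨_, h, Sym2.mem_mk_left a b⟩)

lemma exists_mk_mem_of_mem_matchedVerts (hv : v ∈ matchedVerts M) : ∃ w, s(v, w) ∈ M := by
  obtain ⟨e, he, hve⟩ := mem_matchedVerts.1 hv
  obtain ⟨w, rfl⟩ := Sym2.mem_iff_exists.1 hve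
  exact ⟨w, he⟩

lemma disjoint_of_disjoint_matchedVerts (h : Disjoint (matchedVerts M) (matchedVerts N)) :
    Disjoint M N :=
  Finset.disjoint_left.2 fun e heM heN =>
    Finset.disjoint_left.1 h (mem_matchedVerts.2 ⟨e, heM, e.out_fst_mem⟩)
      (mem_matchedVerts.2 ⟨e, heN, e.out_fst_mem⟩)

namespace IsMatchingFinset

lemma insert (hM : IsMatchingFinset G M) (hab : G.Adj a b) (ha : a ∉ matchedVerts M)
    (hb : b ∉ matchedVerts M) : IsMatchingFinset G (insert s(a, b) M) := by
  have hfree : ∀ f ∈ M, ∀ v ∈ s(a, b), v ∉ f := by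
    rintro f hf v hv hvf
    rcases Sym2.mem_iff.1 hv with rfl | rfl
    exacts [ha (mem_matchedVerts.2 ⟨f, hf, hvf⟩), hb (mem_matchedVerts.2 ⟨f, hf, hvf⟩)]
  refine ⟨?_, ?_⟩
  · rw [coe_insert, Set.insert_subset_iff]
    exact ⟨hab, hM.1⟩
  · rw [coe_insert]
    exact hM.2.insert fun f hf _ => ⟨hfree f hf, fun v hvf hv => hfree f hf v hv hvf⟩

lemma union (hM : IsMatchingFinset G M) (hN : IsMatchingFinset G N)
    (h : Disjoint (matchedVerts M) (matchedVerts N)) : IsMatchingFinset G (M ∪ N) := by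
  have hfree : ∀ e ∈ M, ∀ f ∈ N, ∀ v ∈ e, v ∉ f := fun e he f hf v hve hvf =>
    Finset.disjoint_left.1 h (mem_matchedVerts.2 ⟨e, he, hve⟩) (mem_matchedVerts.2 ⟨f, hf, hvf⟩)
  refine ⟨?_, ?_⟩
  · rw [coe_union]
    exact Set.union_subset hM.1 hN.1
  · rw [coe_union]
    exact Set.pairwise_union.2 ⟨hM.2, hN.2, fun e he f hf _ =>
      ⟨hfree e he f hf, fun v hvf hve => hfree e he f hf v hve hvf⟩⟩

lemma card_matchedVerts (hM : IsMatchingFinset G M) : #(matchedVerts M) = 2 * #M := by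
  rw [matchedVerts, card_biUnion, sum_const_nat, mul_comm]
  · exact fun e he => Sym2.card_toFinset_of_not_isDiag e (G.not_isDiag_of_mem_edgeSet (hM.1 he))
  · intro e he f hf hne
    simp only [Function.onFun, Finset.disjoint_left, Sym2.mem_toFinset]
    exact hM.2 he hf hne

lemma matchedVerts_erase (hM : IsMatchingFinset G M) (h : s(x, y) ∈ M) :
    matchedVerts (M.erase s(x, y)) = ((matchedVerts M).erase x).erase y := by
  ext v
  simp only [mem_matchedVerts, mem_erase]
  constructor
  · rintro ⟨e, ⟨hne, he⟩, hv⟩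
    have hvxy : v ∉ s(x, y) := fun hv' => hne (hM.eq_of_mem he h hv hv')
    exact ⟨fun hvy => hvxy (hvy ▸ Sym2.mem_mk_right x y),
      fun hvx => hvxy (hvx ▸ Sym2.mem_mk_left x y), e, he, hv⟩
  · rintro ⟨hvy, hvx, e, he, hv⟩
    refine ⟨e, ⟨?_, he⟩, hv⟩
    rintro rfl
    rcases Sym2.mem_iff.1 hv with rfl | rfl <;> contradiction

lemma swap (hM : IsMatchingFinset G M) (hxa : s(x, a) ∈ M) (hab : G.Adj a b)
    (hb : b ∉ matchedVerts M) :
    IsMatchingFinset G (Insert.insert s(a, b) (M.erase s(x, a))) ∧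
      #(Insert.insert s(a, b) (M.erase s(x, a))) = #M ∧
      matchedVerts (Insert.insert s(a, b) (M.erase s(x, a))) =
        Insert.insert b ((matchedVerts M).erase x) := by
  have hax : a ≠ x := (hM.adj hxa).ne'
  have hcov := hM.matchedVerts_erase hxa
  have hb' : b ∉ matchedVerts (M.erase s(x, a)) :=
    fun h => hb (matchedVerts_mono (erase_subset _ _) h)
  have ha' : a ∉ matchedVerts (M.erase s(x, a)) := by simp [hcov]
  refine ⟨(hM.subset (erase_subset _ _)).insert hab ha' hb', ?_, ?_⟩
  · rw [card_insert_of_notMem (mk_notMem_of_notMem_matchedVerts ha'), card_erase_add_one hxa]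
  · have ha : a ∈ matchedVerts M := mem_matchedVerts.2 ⟨_, hxa, Sym2.mem_mk_right x a⟩
    rw [matchedVerts_insert, hcov]
    ext v
    simp only [mem_insert, mem_erase]
    grind

end IsMatchingFinset

end MatchedVerts

def MatchingNumberLE (G : SimpleGraph V) (k : ℕ) : Prop :=
  ∀ M, IsMatchingFinset G M → #M ≤ k

lemma exists_isMatchingFinset_matchingNumberLE_card [Finite V] (G : SimpleGraph V) :
    ∃ M, IsMatchingFinset G M ∧ MatchingNumberLE G #M := by
  obtain ⟨M, hM, hmax⟩ := Set.exists_max_image {M | IsMatchingFinset G M} card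
    (Set.toFinite _) ⟨∅, .empty⟩
  exact ⟨M, hM, hmax⟩

section Exchange

variable [DecidableEq V] {A B : Finset (Sym2 V)}

lemma MatchingNumberLE.mem_matchedVerts_of_adj (hk : MatchingNumberLE G #M)
    (hM : IsMatchingFinset G M) (hxy : G.Adj x y) (hx : x ∉ matchedVerts M) :
    y ∈ matchedVerts M := by
  by_contra hy
  have := hk _ (hM.insert hxy hx hy)
  rw [card_insert_of_notMem (mk_notMem_of_notMem_matchedVerts hx)] at this
  omega

/-- The alternating path from `x` in `A ∪ B`, followed one edge of `B` and one edge of `A` at a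
time; keeping the common edges `A ∩ B` is what lets the induction on `#(A \ B)` go through. -/
theorem MatchingNumberLE.exists_exchange (hk : MatchingNumberLE G #A) (hA : IsMatchingFinset G A)
    (hB : IsMatchingFinset G B) (hxA : x ∉ matchedVerts A) (hxB : x ∈ matchedVerts B) :
    ∃ t ∉ matchedVerts B, ∃ B', IsMatchingFinset G B' ∧ #B' = #B ∧
      matchedVerts B' = (insert t (matchedVerts B)).erase x ∧ A ∩ B ⊆ B' := by
  induction hn : #(A \ B) using Nat.strong_induction_on generalizing A x with
  | _ n ih =>
  obtain ⟨a, hxa⟩ := exists_mk_mem_of_mem_matchedVerts hxB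
  have hax : G.Adj a x := (hB.adj hxa).symm
  obtain ⟨b, hab⟩ := exists_mk_mem_of_mem_matchedVerts (hk.mem_matchedVerts_of_adj hA hax.symm hxA)
  have hba : s(b, a) ∈ A := Sym2.eq_swap ▸ hab
  have hbx : b ≠ x := by
    rintro rfl
    exact hxA (mem_matchedVerts.2 ⟨_, hab, Sym2.mem_mk_right a b⟩)
  have hbaB : s(b, a) ∉ B := fun h =>
    hbx (Sym2.congr_right.1 ((hB.eq_of_mem (Sym2.eq_swap ▸ h) hxa (Sym2.mem_mk_left a b)
      (Sym2.mem_mk_right x a)).trans Sym2.eq_swap))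
  have hxaA : s(x, a) ∉ A := mk_notMem_of_notMem_matchedVerts hxA
  by_cases hbB : b ∈ matchedVerts B
  · -- `A` becomes a maximum matching missing `b` instead of `x`, with one edge fewer outside `B`
    obtain ⟨hA', hA'card, hA'cov⟩ := hA.swap hba hax hxA
    have hbA' : b ∉ matchedVerts (insert s(a, x) (A.erase s(b, a))) := by
      rw [hA'cov]
      simp [hbx]
    have hlt : #(insert s(a, x) (A.erase s(b, a)) \ B) < n := by
      rw [← hn]
      refine card_lt_card ((?_ : _ ⊆ (A \ B).erase s(b, a)).trans_ssubset
        (erase_ssubset (mem_sdiff.2 ⟨hba, hbaB⟩)))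
      intro e
      simp only [mem_sdiff, mem_insert, mem_erase]
      rintro ⟨rfl | ⟨hne, he⟩, heB⟩
      exacts [absurd (Sym2.eq_swap ▸ hxa) heB, ⟨hne, he, heB⟩]
    obtain ⟨t, htB, B₃, hB₃, hB₃card, hB₃cov, hB₃common⟩ :=
      ih _ hlt (hA'card ▸ hk) hA' hbA' hbB rfl
    have hxaB₃ : s(x, a) ∈ B₃ :=
      hB₃common (mem_inter.2 ⟨Sym2.eq_swap ▸ mem_insert_self _ _, hxa⟩)
    obtain ⟨hB', hB'card, hB'cov⟩ := hB₃.swap hxaB₃ (hA.adj hab) (by simp [hB₃cov])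
    refine ⟨t, htB, _, hB', hB'card.trans hB₃card, ?_, fun e he => ?_⟩
    · rw [hB'cov, hB₃cov, erase_right_comm,
        insert_erase (mem_erase.2 ⟨hbx, mem_insert_of_mem hbB⟩)]
    · obtain ⟨heA, heB⟩ := mem_inter.1 he
      refine mem_insert_of_mem (mem_erase.2 ⟨fun h => hxaA (h ▸ heA), hB₃common ?_⟩)
      exact mem_inter.2 ⟨mem_insert_of_mem (mem_erase.2 ⟨fun h => hbaB (h ▸ heB), heA⟩), heB⟩
  · obtain ⟨hB', hB'card, hB'cov⟩ := hB.swap hxa (hA.adj hab) hbB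
    refine ⟨b, hbB, _, hB', hB'card, by rw [hB'cov, erase_insert_of_ne hbx], fun e he => ?_⟩
    obtain ⟨heA, heB⟩ := mem_inter.1 he
    exact mem_insert_of_mem (mem_erase.2 ⟨fun h => hxaA (h ▸ heA), heB⟩)

end Exchange

section Saturated

variable [DecidableEq V] {H : SimpleGraph V} {k : ℕ} {u z : V}

lemma IsMatchingFinset.erase_of_sup_edge {K : Finset (Sym2 V)}
    (hK : IsMatchingFinset (H ⊔ edge u v) K) : IsMatchingFinset H (K.erase s(u, v)) := by
  refine ⟨fun e he => ?_, hK.2.mono (coe_subset.2 (erase_subset _ _))⟩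
  obtain ⟨hne, heK⟩ := mem_erase.1 he
  rcases (edgeSet_sup _ _ ▸ hK.1 heK : e ∈ H.edgeSet ∪ (edge u v).edgeSet) with h | h
  · exact h
  · exact absurd (Set.mem_singleton_iff.1 (edgeSet_edge_subset h)) hne

lemma Maximal.exists_isMatchingFinset_notMem_notMem (hH : Maximal (MatchingNumberLE · k) H)
    (huv : u ≠ v) (hnadj : ¬ H.Adj u v) :
    ∃ N, IsMatchingFinset H N ∧ #N = k ∧ u ∉ matchedVerts N ∧ v ∉ matchedVerts N := by
  obtain ⟨K, hK, hkK⟩ : ∃ K, IsMatchingFinset (H ⊔ edge u v) K ∧ k < #K := by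
    simpa [MatchingNumberLE] using hH.not_prop_of_gt (lt_sup_edge _ _ _ huv hnadj)
  have hN := hK.erase_of_sup_edge
  have hle := hH.prop _ hN
  have huvK : s(u, v) ∈ K := by
    by_contra h
    rw [erase_eq_of_notMem h] at hle
    omega
  rw [card_erase_of_mem huvK] at hle
  refine ⟨_, hN, by rw [card_erase_of_mem huvK]; omega, ?_, ?_⟩ <;>
    simp [hK.matchedVerts_erase huvK]

/-- Gallai's lemma. If `y` misses `w`, saturation gives maximum matchings `M` missing `x, z` and
`N` missing `y`; exchanging along `N` turns `M` into a maximum matching missing `y` and one of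
`x, z`, which then extends. -/
theorem Maximal.isClique_neighborSet (hH : Maximal (MatchingNumberLE · k) H)
    (hy : ¬ H.IsUniversal y) : H.IsClique (H.neighborSet y) := by
  intro x hxy z hyz hxz
  by_contra hnxz
  obtain ⟨w, hyw, hnyw⟩ : ∃ w, y ≠ w ∧ ¬ H.Adj y w := by simpa [IsUniversal] using hy
  obtain ⟨M, hM, hMk, hxM, hzM⟩ := hH.exists_isMatchingFinset_notMem_notMem hxz hnxz
  obtain ⟨N, hN, hNk, hyN, -⟩ := hH.exists_isMatchingFinset_notMem_notMem hyw hnyw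
  have hyM : y ∈ matchedVerts M :=
    (hMk ▸ hH.prop).mem_matchedVerts_of_adj hM (H.adj_symm hxy) hxM
  obtain ⟨t, -, M', hM', hM'k, hM'cov, -⟩ := (hNk ▸ hH.prop).exists_exchange hN hM hyN hyM
  obtain ⟨u, hu, hut, huy⟩ : ∃ u ∉ matchedVerts M, u ≠ t ∧ H.Adj u y := by
    by_cases hxt : x = t
    · exact ⟨z, hzM, fun h => hxz (hxt.trans h.symm), H.adj_symm hyz⟩
    · exact ⟨x, hxM, hxt, H.adj_symm hxy⟩
  have := ((hM'k.trans hMk) ▸ hH.prop).mem_matchedVerts_of_adj hM' huy (by simp [hM'cov, hu, hut])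
  simp [hM'cov] at this

end Saturated

section Cliques

variable [DecidableEq V] {H : SimpleGraph V}

theorem exists_isMatchingFinset_of_isClique {S : Finset V} (hS : H.IsClique (S : Set V)) :
    ∃ M, IsMatchingFinset H M ∧ matchedVerts M ⊆ S ∧ #M = #S / 2 := by
  induction hn : #S using Nat.strong_induction_on generalizing S with
  | _ n ih =>
  by_cases hS1 : #S ≤ 1
  · exact ⟨∅, .empty, by simp, by simp; omega⟩
  obtain ⟨a, ha, b, hb, hab⟩ := one_lt_card.1 (not_le.1 hS1)
  have hb' : b ∈ S.erase a := mem_erase.2 ⟨Ne.symm hab, hb⟩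
  have hcard : #((S.erase a).erase b) = n - 2 := by
    rw [card_erase_of_mem hb', card_erase_of_mem ha, hn]; omega
  have hsub : (S.erase a).erase b ⊆ S := (erase_subset _ _).trans (erase_subset _ _)
  obtain ⟨M, hM, hMS, hMcard⟩ := ih _ (by omega) (hS.subset (coe_subset.2 hsub)) hcard
  have haM : a ∉ matchedVerts M := fun h => by simpa using hMS h
  have hbM : b ∉ matchedVerts M := fun h => by simpa using hMS h
  refine ⟨_, hM.insert (hS ha hb hab) haM hbM, ?_, ?_⟩
  · rw [matchedVerts_insert]
    exact insert_subset ha (insert_subset hb (hMS.trans hsub))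
  · rw [card_insert_of_notMem (mk_notMem_of_notMem_matchedVerts haM), hMcard]
    omega

theorem exists_isMatchingFinset_of_isClique_of_forall_adj {P L : Finset V}
    (hP : H.IsClique (P : Set V)) (hPL : Disjoint P L) (hadj : ∀ p ∈ P, ∀ u ∈ L, H.Adj p u) :
    ∃ M, IsMatchingFinset H M ∧ matchedVerts M ⊆ P ∪ L ∧
      #M = min #P #L + (#P - #L) / 2 := by
  induction hn : #P generalizing P L with
  | zero => exact ⟨∅, .empty, by simp, by simp⟩
  | succ n ih =>
  obtain ⟨p, hp⟩ : P.Nonempty := card_pos.1 (by omega)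
  rcases L.eq_empty_or_nonempty with rfl | ⟨u, hu⟩
  · obtain ⟨M, hM, hMP, hMcard⟩ := exists_isMatchingFinset_of_isClique hP
    exact ⟨M, hM, by simpa using hMP, by simp [hMcard, hn]⟩
  have hpu : p ≠ u := fun h => Finset.disjoint_left.1 hPL hp (h ▸ hu)
  obtain ⟨M, hM, hMPL, hMcard⟩ := ih (hP.subset (coe_subset.2 (erase_subset p P)))
    (disjoint_of_subset_left (erase_subset _ _) (disjoint_of_subset_right (erase_subset _ _) hPL))
    (fun a ha b hb => hadj a (mem_of_mem_erase ha) b (mem_of_mem_erase hb))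
    (by rw [card_erase_of_mem hp, hn]; rfl) (L := L.erase u)
  have hpM : p ∉ matchedVerts M := fun h => by
    rcases mem_union.1 (hMPL h) with h | h
    · simp at h
    · exact Finset.disjoint_left.1 hPL hp (mem_of_mem_erase h)
  have huM : u ∉ matchedVerts M := fun h => by
    rcases mem_union.1 (hMPL h) with h | h
    · exact Finset.disjoint_left.1 hPL (mem_of_mem_erase h) hu
    · simp at h
  refine ⟨_, hM.insert (hadj p hp u hu) hpM huM, ?_, ?_⟩
  · rw [matchedVerts_insert]
    refine insert_subset (mem_union_left _ hp) (insert_subset (mem_union_right _ hu) ?_)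
    exact hMPL.trans (union_subset_union (erase_subset _ _) (erase_subset _ _))
  · rw [card_insert_of_notMem (mk_notMem_of_notMem_matchedVerts hpM), hMcard,
      card_erase_of_mem hu]
    have := card_pos.2 ⟨u, hu⟩
    omega

theorem exists_isMatchingFinset_of_pairwiseDisjoint_isClique (Q : Finset (Finset V))
    (hdisj : (Q : Set (Finset V)).PairwiseDisjoint id) (hQ : ∀ C ∈ Q, H.IsClique (C : Set V)) :
    ∃ M, IsMatchingFinset H M ∧ matchedVerts M ⊆ Q.biUnion id ∧
      2 * #M + #{C ∈ Q | Odd #C} = #(Q.biUnion id) := by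
  induction Q using Finset.induction_on with
  | empty => exact ⟨∅, .empty, by simp, by simp⟩
  | @insert C Q hCQ ih =>
  rw [coe_insert] at hdisj
  obtain ⟨M, hM, hMQ, hMcard⟩ := ih (hdisj.subset (Set.subset_insert _ _))
    (fun C' hC' => hQ C' (mem_insert_of_mem hC'))
  obtain ⟨MC, hMC, hMCC, hMCcard⟩ := exists_isMatchingFinset_of_isClique (hQ C (mem_insert_self _ _))
  have hCQ' : Disjoint C (Q.biUnion id) := by
    rw [disjoint_biUnion_right]
    exact fun C' hC' => hdisj (Set.mem_insert _ _) (Set.mem_insert_of_mem _ hC')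
      (fun h => hCQ (h ▸ hC'))
  have hcov : Disjoint (matchedVerts MC) (matchedVerts M) :=
    disjoint_of_subset_left hMCC (disjoint_of_subset_right hMQ hCQ')
  refine ⟨MC ∪ M, hMC.union hM hcov, ?_, ?_⟩
  · rw [matchedVerts_union, biUnion_insert]
    exact union_subset_union hMCC hMQ
  · rw [card_union_of_disjoint (disjoint_of_disjoint_matchedVerts hcov), filter_insert,
      biUnion_insert, id_eq, card_union_of_disjoint hCQ', hMCcard, ← hMcard]
    split_ifs with hodd
    · rw [card_insert_of_notMem (fun h => hCQ (mem_filter.1 h).1)]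
      have := Nat.odd_iff.1 hodd
      omega
    · have := Nat.even_iff.1 (Nat.not_odd_iff_even.1 hodd)
      omega

end Cliques

theorem exists_second_largest_card {α : Type*} [DecidableEq α] {Q : Finset (Finset α)}
    (hdisj : (Q : Set (Finset α)).PairwiseDisjoint id) (hQ : ∀ C ∈ Q, C.Nonempty) (h2 : 2 ≤ #Q) :
    ∃ C₀ ∈ Q, ∃ c, 1 ≤ c ∧ (∀ C ∈ Q.erase C₀, #C ≤ c) ∧
      c + (#Q - 2) ≤ #((Q.erase C₀).biUnion id) ∧
      c + #((Q.erase C₀).biUnion id) ≤ #(Q.biUnion id) := by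
  obtain ⟨C₀, hC₀, hC₀max⟩ := exists_max_image Q card (card_pos.1 (by omega))
  have hcard := card_erase_of_mem hC₀
  obtain ⟨C₁, hC₁, hC₁max⟩ := exists_max_image (Q.erase C₀) card (card_pos.1 (by omega))
  have hdisj' := hdisj.subset (coe_subset.2 (erase_subset C₀ Q))
  refine ⟨C₀, hC₀, #C₁, card_pos.2 (hQ _ (mem_of_mem_erase hC₁)), hC₁max, ?_, ?_⟩
  · rw [card_biUnion hdisj', ← add_sum_erase _ _ hC₁]
    have := card_nsmul_le_sum ((Q.erase C₀).erase C₁) (fun C => #(id C)) 1 fun C hC =>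
      card_pos.2 (hQ _ (mem_of_mem_erase (mem_of_mem_erase hC)))
    rw [card_erase_of_mem hC₁, smul_eq_mul, mul_one] at this
    simp only [id] at this ⊢
    omega
  · rw [card_biUnion hdisj, card_biUnion hdisj', ← add_sum_erase _ _ hC₀]
    exact Nat.add_le_add_right (hC₀max _ (mem_of_mem_erase hC₁)) _

namespace SimpleGraph

variable {H : SimpleGraph V} {k : ℕ} {w z : V}

lemma eq_or_adj_trans (hH : ∀ y, ¬ H.IsUniversal y → H.IsClique (H.neighborSet y))
    (hw : ¬ H.IsUniversal w) (hvw : w = v ∨ H.Adj v w) (hwz : z = w ∨ H.Adj w z) :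
    z = v ∨ H.Adj v z := by
  rcases hvw with rfl | hvw
  · exact hwz
  rcases hwz with rfl | hwz
  · exact .inr hvw
  by_cases hzv : z = v
  · exact .inl hzv
  · exact .inr (hH w hw (H.adj_symm hvw) hwz (Ne.symm hzv))

section NonUniversalClasses

variable [Fintype V] [DecidableEq V]

def nonUniversalClass (H : SimpleGraph V) [DecidableRel H.Adj] [DecidablePred H.IsUniversal]
    (v : V) : Finset V :=
  {w | ¬ H.IsUniversal w ∧ (w = v ∨ H.Adj v w)}

def nonUniversalClasses (H : SimpleGraph V) [DecidableRel H.Adj] [DecidablePred H.IsUniversal] :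
    Finset (Finset V) :=
  ({v | ¬ H.IsUniversal v} : Finset V).image H.nonUniversalClass

variable [DecidableRel H.Adj] [DecidablePred H.IsUniversal]

lemma mem_nonUniversalClass :
    w ∈ H.nonUniversalClass v ↔ ¬ H.IsUniversal w ∧ (w = v ∨ H.Adj v w) := by
  simp [nonUniversalClass]

lemma mem_nonUniversalClass_self (hv : ¬ H.IsUniversal v) : v ∈ H.nonUniversalClass v :=
  mem_nonUniversalClass.2 ⟨hv, .inl rfl⟩

lemma nonUniversalClass_eq_of_mem (hH : ∀ y, ¬ H.IsUniversal y → H.IsClique (H.neighborSet y))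
    (hv : ¬ H.IsUniversal v) (hw : w ∈ H.nonUniversalClass v) :
    H.nonUniversalClass w = H.nonUniversalClass v := by
  obtain ⟨hw, hvw⟩ := mem_nonUniversalClass.1 hw
  have hwv : v = w ∨ H.Adj w v := hvw.imp Eq.symm H.adj_symm
  ext z
  simp only [mem_nonUniversalClass, and_congr_right_iff]
  exact fun _ => ⟨eq_or_adj_trans hH hw hvw, eq_or_adj_trans hH hv hwv⟩

lemma isClique_nonUniversalClass (hH : ∀ y, ¬ H.IsUniversal y → H.IsClique (H.neighborSet y))
    (hv : ¬ H.IsUniversal v) : H.IsClique (H.nonUniversalClass v : Set V) := by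
  intro x hx y hy hxy
  rw [mem_coe, ← nonUniversalClass_eq_of_mem hH hv hx, mem_nonUniversalClass] at hy
  exact hy.2.resolve_left (Ne.symm hxy)

lemma degree_add_one_eq (hv : ¬ H.IsUniversal v) :
    H.degree v + 1 = #{u | H.IsUniversal u} + #(H.nonUniversalClass v) := by
  have hnbr : H.neighborFinset v =
      ({u | H.IsUniversal u} : Finset V) ∪ (H.nonUniversalClass v).erase v := by
    ext u
    simp only [mem_neighborFinset, mem_union, mem_filter_univ, mem_erase, mem_nonUniversalClass]
    by_cases hu : H.IsUniversal u
    · simp only [hu, true_or, iff_true]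
      exact H.adj_symm (hu fun h => hv (h ▸ hu))
    · simp only [hu, false_or, not_false_eq_true, true_and]
      exact ⟨fun h => ⟨h.ne', .inr h⟩, fun ⟨hne, h⟩ => h.resolve_left hne⟩
  rw [← card_neighborFinset_eq_degree, hnbr, card_union_of_disjoint, card_erase_of_mem
    (mem_nonUniversalClass_self hv)]
  · have := card_pos.2 ⟨v, mem_nonUniversalClass_self hv⟩
    omega
  · refine Finset.disjoint_left.2 fun u hu hu' => ?_
    exact (mem_nonUniversalClass.1 (mem_of_mem_erase hu')).1 ((mem_filter_univ _).1 hu)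

lemma mem_nonUniversalClasses {C : Finset V} :
    C ∈ H.nonUniversalClasses ↔ ∃ v, ¬ H.IsUniversal v ∧ H.nonUniversalClass v = C := by
  simp [nonUniversalClasses]

lemma pairwiseDisjoint_nonUniversalClasses
    (hH : ∀ y, ¬ H.IsUniversal y → H.IsClique (H.neighborSet y)) :
    (H.nonUniversalClasses : Set (Finset V)).PairwiseDisjoint id := by
  intro C hC C' hC' hne
  obtain ⟨v, hv, rfl⟩ := mem_nonUniversalClasses.1 hC
  obtain ⟨v', hv', rfl⟩ := mem_nonUniversalClasses.1 hC'
  refine Finset.disjoint_left.2 fun w hw hw' => hne ?_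
  exact (nonUniversalClass_eq_of_mem hH hv hw).symm.trans (nonUniversalClass_eq_of_mem hH hv' hw')

lemma biUnion_nonUniversalClasses :
    H.nonUniversalClasses.biUnion id = ({v | ¬ H.IsUniversal v} : Finset V) := by
  ext w
  simp only [mem_biUnion, id, mem_nonUniversalClasses, mem_filter_univ]
  constructor
  · rintro ⟨_, ⟨v, hv, rfl⟩, hw⟩
    exact (mem_nonUniversalClass.1 hw).1
  · exact fun hw => ⟨_, ⟨w, hw, rfl⟩, mem_nonUniversalClass_self hw⟩

lemma card_universal_add_card_biUnion_nonUniversalClasses :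
    #{u | H.IsUniversal u} + #(H.nonUniversalClasses.biUnion id) = Fintype.card V := by
  rw [biUnion_nonUniversalClasses, card_filter_add_card_filter_not, card_univ]

/-- The Tutte–Berge bound with the universal vertices as barrier: match inside the classes, then
the universal vertices against the vertices left over. -/
theorem MatchingNumberLE.card_universal_add_le
    (hH : ∀ y, ¬ H.IsUniversal y → H.IsClique (H.neighborSet y)) (hk : MatchingNumberLE H k)
    (hn : 2 * k + 2 ≤ Fintype.card V) :
    #{u | H.IsUniversal u} + Fintype.card V ≤ 2 * k + #{C ∈ H.nonUniversalClasses | Odd #C} := by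
  obtain ⟨M, hM, hMR, hMcard⟩ := exists_isMatchingFinset_of_pairwiseDisjoint_isClique _
    (pairwiseDisjoint_nonUniversalClasses hH) fun C hC => by
      obtain ⟨v, hv, rfl⟩ := mem_nonUniversalClasses.1 hC
      exact isClique_nonUniversalClass hH hv
  have hAR : Disjoint ({u | H.IsUniversal u} : Finset V) (H.nonUniversalClasses.biUnion id) := by
    rw [biUnion_nonUniversalClasses]
    exact disjoint_filter_filter_not _ _ _
  have hA : H.IsClique (({u | H.IsUniversal u} : Finset V) : Set V) :=
    fun x hx _ _ hxy => (mem_filter_univ _).1 hx hxy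
  obtain ⟨M', hM', hM'cov, hM'card⟩ := exists_isMatchingFinset_of_isClique_of_forall_adj hA
    (disjoint_of_subset_right sdiff_subset hAR) fun p hp u hu => (mem_filter_univ _).1 hp
      fun h => Finset.disjoint_left.1 hAR hp (h ▸ (mem_sdiff.1 hu).1)
  have hdisj : Disjoint (matchedVerts M) (matchedVerts M') := by
    refine disjoint_of_subset_right hM'cov (disjoint_union_right.2 ⟨?_, disjoint_sdiff⟩)
    exact disjoint_of_subset_left hMR hAR.symm
  have hle := hk _ (hM.union hM' hdisj)
  rw [card_union_of_disjoint (disjoint_of_disjoint_matchedVerts hdisj), hM'card,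
    card_sdiff_of_subset hMR, hM.card_matchedVerts] at hle
  have := card_universal_add_card_biUnion_nonUniversalClasses (H := H)
  omega

theorem MatchingNumberLE.exists_le_card_degree_le
    (hH : ∀ y, ¬ H.IsUniversal y → H.IsClique (H.neighborSet y)) (hk : MatchingNumberLE H k)
    (hn : 2 * k + 2 ≤ Fintype.card V) :
    ∃ q ≤ k, Fintype.card V + q ≤ 2 * k + 1 + #{v | H.degree v ≤ q} := by
  have hdef := hk.card_universal_add_le hH hn
  have hsplit := card_universal_add_card_biUnion_nonUniversalClasses (H := H)
  have hsub := filter_subset (fun C => Odd #C) H.nonUniversalClasses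
  obtain ⟨C₀, -, c, hc, hcmax, hW, hWC₀⟩ := exists_second_largest_card
    ((pairwiseDisjoint_nonUniversalClasses hH).subset (coe_subset.2 hsub))
    (fun C hC => card_pos.1 (mem_filter.1 hC).2.pos) (by omega)
  have hodd := card_le_card (biUnion_subset_biUnion_of_subset_left id hsub)
  have hdeg : ({C ∈ H.nonUniversalClasses | Odd #C}.erase C₀).biUnion id ⊆
      ({v | H.degree v ≤ #{u | H.IsUniversal u} + c - 1} : Finset V) := by
    intro v hv
    obtain ⟨C, hC, hvC⟩ := mem_biUnion.1 hv
    obtain ⟨u, hu, rfl⟩ := mem_nonUniversalClasses.1 (hsub (mem_of_mem_erase hC))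
    have hdeg := degree_add_one_eq (mem_nonUniversalClass.1 hvC).1
    rw [nonUniversalClass_eq_of_mem hH hu hvC] at hdeg
    have := hcmax _ hC
    exact (mem_filter_univ _).2 (by omega)
  have := card_le_card hdeg
  exact ⟨#{u | H.IsUniversal u} + c - 1, by omega, by omega⟩

end NonUniversalClasses

end SimpleGraph

lemma sInf_le_of_exists_le {n k : ℕ} (D : ℕ → ℕ) (h : ∃ q ≤ k, n + q ≤ 2 * k + 1 + D q) :
    sInf {x : ℝ | ∃ q : ℕ, 2 * q + 1 < n ∧
      x = max (((n : ℝ) - (D q : ℝ) + (q : ℝ) - 1) / 2) (q : ℝ)} ≤ k := by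
  obtain ⟨q, hqk, hq⟩ := h
  set S := {x : ℝ | ∃ q : ℕ, 2 * q + 1 < n ∧
    x = max (((n : ℝ) - (D q : ℝ) + (q : ℝ) - 1) / 2) (q : ℝ)}
  have hbdd : BddBelow S :=
    ⟨0, by rintro _ ⟨q, -, rfl⟩; exact (Nat.cast_nonneg q).trans (le_max_right _ _)⟩
  have hmem {q : ℕ} (hqn : 2 * q + 1 < n) (hqk : q ≤ k) (hq : n + q ≤ 2 * k + 1 + D q) :
      sInf S ≤ k := by
    refine (csInf_le hbdd ⟨q, hqn, rfl⟩).trans (max_le ?_ (by exact_mod_cast hqk))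
    rw [div_le_iff₀ two_pos]
    have : ((n + q : ℕ) : ℝ) ≤ ((2 * k + 1 + D q : ℕ) : ℝ) := by exact_mod_cast hq
    push_cast at this
    linarith
  by_cases hqn : 2 * q + 1 < n
  · exact hmem hqn hqk hq
  by_cases hn : n ≤ 1
  · rw [show S = ∅ from Set.eq_empty_of_forall_notMem (by rintro _ ⟨q, hq, -⟩; omega),
      Real.sInf_empty]
    exact Nat.cast_nonneg k
  · exact hmem (q := 0) (by omega) (Nat.zero_le k) (by omega)

end

theorem matching_number_lower_bound_general
    {V : Type*} [Fintype V] (G : SimpleGraph V) [DecidableRel G.Adj] :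
    ∃ M : Finset (Sym2 V), IsMatchingFinset G M ∧
      sInf {x : ℝ | ∃ q : ℕ, 2 * q + 1 < Fintype.card V ∧
          x = max (((Fintype.card V : ℝ) -
              ((Finset.univ.filter fun v => G.degree v ≤ q).card : ℝ) + (q : ℝ) - 1) / 2)
            (q : ℝ)} ≤ (M.card : ℝ) := by
  classical
  obtain ⟨M, hM, hk⟩ := exists_isMatchingFinset_matchingNumberLE_card G
  refine ⟨M, hM, sInf_le_of_exists_le _ ?_⟩
  by_cases hn : Fintype.card V ≤ 2 * #M + 1
  · exact ⟨0, Nat.zero_le _, by omega⟩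
  obtain ⟨H, hGH, hH⟩ := Finite.exists_le_maximal (p := (MatchingNumberLE · #M)) hk
  obtain ⟨q, hqk, hq⟩ :=
    hH.prop.exists_le_card_degree_le (fun _ => hH.isClique_neighborSet) (by omega)
  refine ⟨q, hqk, hq.trans (Nat.add_le_add_left (card_le_card fun v => ?_) _)⟩
  simpa using (degree_le_of_le hGH).trans

/-- For a simple graph `G` on `n` vertices,
`ν(G) ≥ min_{0 ≤ q < (n-1)/2} max( (n − D_{≤q}(G) + q − 1)/2 , q )`,
where `D_{≤q}(G)` is the number of vertices of degree at most `q`. -/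
theorem matching_number_lower_bound
    {V : Type*} [Fintype V] [DecidableEq V] (G : SimpleGraph V) [DecidableRel G.Adj] :
    ∃ M : Finset (Sym2 V), IsMatchingFinset G M ∧
      sInf {x : ℝ | ∃ q : ℕ, 2 * q + 1 < Fintype.card V ∧
          x = max (((Fintype.card V : ℝ) -
              ((Finset.univ.filter fun v => G.degree v ≤ q).card : ℝ) + (q : ℝ) - 1) / 2)
            (q : ℝ)} ≤ (M.card : ℝ) :=
  matching_number_lower_bound_general G
end

section
/- For every positive integer k ≥ 3, there exists a connected, vertex-transitive, 4-regular simple graph G on 4k vertices such that for every vertex v, the subgraph induced by the neighborhood of v is isomorphic to K_3 plus an isolated vertex; consequently the complement of the induced neighborhood of v contains no matching of size 2, so no vertex is DP-removable. -/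
/-!
The graph is a necklace of `k` copies of `K₄`, consecutive blocks joined by two disjoint
edges. Each vertex lies in one `K₄` and has exactly one further neighbour, in an adjacent
block, which for `k ≥ 2` is adjacent to none of the other three. So every neighbourhood
induces `K₃ + K₁`, and every non-edge inside it meets the isolated vertex, which rules out
two disjoint non-edges. Rotating the necklace, swapping the two edges between blocks, and
reflecting the necklace act transitively on the vertices.
-/

open Set

namespace SimpleGraph

variable {V W : Type*}

def IsVertexTransitive (G : SimpleGraph V) : Prop :=
  ∀ u v, ∃ φ : G ≃g G, φ u = v

theorem IsVertexTransitive.of_exists_apply_eq {G : SimpleGraph V} (v₀ : V)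
    (h : ∀ v, ∃ φ : G ≃g G, φ v₀ = v) : G.IsVertexTransitive := by
  intro u v
  obtain ⟨φ, rfl⟩ := h u
  obtain ⟨ψ, rfl⟩ := h v
  exact ⟨φ.symm.trans ψ, by simp⟩

theorem IsVertexTransitive.of_iso {G : SimpleGraph V} {H : SimpleGraph W} (ι : G ≃g H)
    (hH : H.IsVertexTransitive) : G.IsVertexTransitive := by
  intro u v
  obtain ⟨φ, hφ⟩ := hH (ι u) (ι v)
  exact ⟨(ι.trans φ).trans ι.symm, by simp [hφ]⟩

def InducesK3PlusK1 (G : SimpleGraph V) (s : Set V) : Prop :=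
  ∃ a b c d : V, s = {a, b, c, d} ∧
    a ≠ b ∧ a ≠ c ∧ a ≠ d ∧ b ≠ c ∧ b ≠ d ∧ c ≠ d ∧
    G.Adj a b ∧ G.Adj a c ∧ G.Adj b c ∧ ¬ G.Adj a d ∧ ¬ G.Adj b d ∧ ¬ G.Adj c d

namespace InducesK3PlusK1

variable {G : SimpleGraph V} {s : Set V}

theorem ncard_eq_four (h : G.InducesK3PlusK1 s) : s.ncard = 4 := by
  obtain ⟨a, b, c, d, rfl, hab, hac, had, hbc, hbd, hcd, -⟩ := h
  rw [ncard_insert_of_notMem (by simp [hab, hac, had]),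
    ncard_insert_of_notMem (by simp [hbc, hbd]), ncard_insert_of_notMem (by simp [hcd]),
    ncard_singleton]

theorem image {H : SimpleGraph W} (φ : G ≃g H) (h : G.InducesK3PlusK1 s) :
    H.InducesK3PlusK1 (φ '' s) := by
  obtain ⟨a, b, c, d, rfl, hab, hac, had, hbc, hbd, hcd, h⟩ := h
  refine ⟨φ a, φ b, φ c, φ d, by simp only [image_insert_eq, image_singleton],
    φ.injective.ne hab, φ.injective.ne hac, φ.injective.ne had, φ.injective.ne hbc,
    φ.injective.ne hbd, φ.injective.ne hcd, ?_⟩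
  simpa only [Iso.map_adj_iff] using h

theorem not_exists_two_disjoint_nonadj (h : G.InducesK3PlusK1 s) :
    ¬ ∃ u₁ w₁ u₂ w₂ : V, u₁ ∈ s ∧ w₁ ∈ s ∧ u₂ ∈ s ∧ w₂ ∈ s ∧
      u₁ ≠ w₁ ∧ u₂ ≠ w₂ ∧ u₁ ≠ u₂ ∧ u₁ ≠ w₂ ∧ w₁ ≠ u₂ ∧ w₁ ≠ w₂ ∧
      ¬ G.Adj u₁ w₁ ∧ ¬ G.Adj u₂ w₂ := by
  obtain ⟨a, b, c, d, rfl, hab, hac, had, hbc, hbd, hcd, gab, gac, gbc, -⟩ := h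
  have mem_d : ∀ x ∈ ({a, b, c, d} : Set V), ∀ y ∈ ({a, b, c, d} : Set V),
      x ≠ y → ¬ G.Adj x y → x = d ∨ y = d := by
    simp only [mem_insert_iff, mem_singleton_iff]
    rintro x (rfl | rfl | rfl | rfl) y (rfl | rfl | rfl | rfl) <;>
      simp_all [G.adj_comm]
  rintro ⟨u₁, w₁, u₂, w₂, hu₁, hw₁, hu₂, hw₂, h₁, h₂, h₁₂, h₁₂', h₂₁, h₂₂, n₁, n₂⟩
  rcases mem_d _ hu₁ _ hw₁ h₁ n₁ with rfl | rfl <;>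
    rcases mem_d _ hu₂ _ hw₂ h₂ n₂ with rfl | rfl <;> simp_all

end InducesK3PlusK1

def Iso.fromRel {r : V → V → Prop} {r' : W → W → Prop} (e : V ≃ W)
    (h : ∀ a b, r' (e a) (e b) ∨ r' (e b) (e a) ↔ r a b ∨ r b a) :
    fromRel r ≃g fromRel r' where
  toEquiv := e
  map_rel_iff' := by simp [e.injective.ne_iff, h]

abbrev necklaceLink (s t : Fin 4) : Prop :=
  (s = 2 ∧ t = 0) ∨ (s = 3 ∧ t = 1)

-- Vertex `(i, j)` is `v_{4i+j+1}`: the blocks are the `K₄`s, `necklaceLink` gives the edges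
-- `v_{4i+3} v_{4i+5}` and `v_{4i+4} v_{4i+6}` to the next block.
def k4Necklace (k : ℕ) : SimpleGraph (ZMod k × Fin 4) :=
  fromRel fun x y => x.1 = y.1 ∨ (y.1 = x.1 + 1 ∧ necklaceLink x.2 y.2)

namespace k4Necklace

variable (k : ℕ)

def shift (a : ZMod k) : k4Necklace k ≃g k4Necklace k :=
  Iso.fromRel ((Equiv.addRight a).prodCongr (Equiv.refl _)) fun x y => by
    simp [add_right_comm _ a]

@[simp]
theorem shift_apply (a : ZMod k) (x : ZMod k × Fin 4) : shift k a x = (x.1 + a, x.2) :=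
  rfl

def swapLanes : k4Necklace k ≃g k4Necklace k :=
  Iso.fromRel ((Equiv.refl _).prodCongr (Equiv.swap 0 1 * Equiv.swap 2 3)) fun x y => by
    have : ∀ s t : Fin 4, necklaceLink (Equiv.swap 0 1 (Equiv.swap 2 3 s))
      (Equiv.swap 0 1 (Equiv.swap 2 3 t)) ↔ necklaceLink s t := by decide
    simp [this]

@[simp]
theorem swapLanes_apply (x : ZMod k × Fin 4) :
    swapLanes k x = (x.1, Equiv.swap 0 1 (Equiv.swap 2 3 x.2)) :=
  rfl

def reflect : k4Necklace k ≃g k4Necklace k :=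
  Iso.fromRel ((Equiv.neg _).prodCongr Fin.revPerm) fun x y => by
    have : ∀ s t : Fin 4, necklaceLink (Fin.rev s) (Fin.rev t) ↔ necklaceLink t s := by decide
    have h : ∀ i j : ZMod k, -j = -i + 1 ↔ i = j + 1 := fun i j => by
      constructor <;> intro h <;> linear_combination h
    simp only [Equiv.prodCongr_apply, Prod.map_fst, Prod.map_snd, Equiv.neg_apply,
      Fin.revPerm_apply, neg_inj, h, this]
    tauto

@[simp]
theorem reflect_apply (x : ZMod k × Fin 4) : reflect k x = (-x.1, Fin.rev x.2) :=
  rfl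

theorem exists_iso_apply_zero_eq (s : Fin 4) :
    ∃ φ : k4Necklace k ≃g k4Necklace k, φ (0, 0) = (0, s) := by
  fin_cases s
  · exact ⟨Iso.refl, rfl⟩
  · exact ⟨swapLanes k, rfl⟩
  · exact ⟨(swapLanes k).trans (reflect k), by simp; decide⟩
  · exact ⟨reflect k, by simp⟩

theorem isVertexTransitive : (k4Necklace k).IsVertexTransitive :=
  .of_exists_apply_eq (0, 0) fun ⟨i, s⟩ => by
    obtain ⟨φ, hφ⟩ := exists_iso_apply_zero_eq k s
    exact ⟨φ.trans (shift k i), by simp [hφ]⟩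

variable {k}

theorem adj_same_block {i : ZMod k} {s t : Fin 4} (h : s ≠ t) :
    (k4Necklace k).Adj (i, s) (i, t) := by
  simp [k4Necklace, h]

theorem reachable_succ (i : ZMod k) : (k4Necklace k).Reachable (i, 0) (i + 1, 0) :=
  (adj_same_block (by decide : (0 : Fin 4) ≠ 2)).reachable.trans
    (Adj.reachable (by simp [k4Necklace, necklaceLink]))

variable (k)

theorem connected : (k4Necklace k).Connected := by
  have hcycle : ∀ n : ℤ, (k4Necklace k).Reachable (0, 0) (n, 0) := by
    intro n
    induction n using Int.induction_on with
    | zero => simp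
    | succ n ih => simpa using ih.trans (reachable_succ _)
    | pred n ih => exact ih.trans (by simpa using (reachable_succ ((-n - 1 : ℤ) : ZMod k)).symm)
  refine (connected_iff _).mpr ⟨fun x y => ?_, ⟨(0, 0)⟩⟩
  suffices h : ∀ v, (k4Necklace k).Reachable (0, 0) v from (h x).symm.trans (h y)
  rintro ⟨i, s⟩
  obtain ⟨n, rfl⟩ := ZMod.intCast_surjective i
  refine (hcycle n).trans ?_
  rcases eq_or_ne 0 s with rfl | hs
  · rfl
  · exact (adj_same_block hs).reachable

theorem neighborSet_zero :
    (k4Necklace k).neighborSet (0, 0) = {(0, 1), (0, 2), (0, 3), (-1, 2)} := by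
  ext ⟨i, s⟩
  fin_cases s <;> simp [k4Necklace, eq_neg_iff_add_eq_zero] <;> tauto

variable {k} [Fact (1 < k)]

theorem inducesK3PlusK1_neighborSet_zero :
    (k4Necklace k).InducesK3PlusK1 ((k4Necklace k).neighborSet (0, 0)) := by
  have h : (-1 : ZMod k) ≠ 0 := neg_ne_zero.mpr one_ne_zero
  refine ⟨(0, 1), (0, 2), (0, 3), (-1, 2), neighborSet_zero k, ?_⟩
  simp [k4Necklace, h, h.symm, necklaceLink]

theorem inducesK3PlusK1_neighborSet (v : ZMod k × Fin 4) :
    (k4Necklace k).InducesK3PlusK1 ((k4Necklace k).neighborSet v) := by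
  obtain ⟨φ, rfl⟩ := isVertexTransitive k (0, 0) v
  rw [← φ.image_neighborSet]
  exact inducesK3PlusK1_neighborSet_zero.image φ

end k4Necklace

end SimpleGraph

open SimpleGraph in
/-- For every `k ≥ 3` there is a connected, vertex-transitive, 4-regular simple graph on
`4k` vertices in which the induced neighborhood of every vertex is a `K₃` plus an
isolated vertex; consequently the complement of every induced neighborhood has no
matching of size 2, so no vertex is DP-removable. -/
theorem exists_irreducible_four_regular (k : ℕ) (hk : 3 ≤ k) :
    ∃ G : SimpleGraph (Fin (4 * k)),
      G.Connected ∧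
      (∀ u v : Fin (4 * k), ∃ φ : G ≃g G, φ u = v) ∧
      (∀ v, (G.neighborSet v).ncard = 4) ∧
      (∀ v, ∃ a b c d : Fin (4 * k),
        G.neighborSet v = {a, b, c, d} ∧
        a ≠ b ∧ a ≠ c ∧ a ≠ d ∧ b ≠ c ∧ b ≠ d ∧ c ≠ d ∧
        G.Adj a b ∧ G.Adj a c ∧ G.Adj b c ∧
        ¬ G.Adj a d ∧ ¬ G.Adj b d ∧ ¬ G.Adj c d) ∧
      (∀ v, ¬ ∃ u₁ w₁ u₂ w₂ : Fin (4 * k),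
        u₁ ∈ G.neighborSet v ∧ w₁ ∈ G.neighborSet v ∧
        u₂ ∈ G.neighborSet v ∧ w₂ ∈ G.neighborSet v ∧
        u₁ ≠ w₁ ∧ u₂ ≠ w₂ ∧ u₁ ≠ u₂ ∧ u₁ ≠ w₂ ∧ w₁ ≠ u₂ ∧ w₁ ≠ w₂ ∧
        ¬ G.Adj u₁ w₁ ∧ ¬ G.Adj u₂ w₂) := by
  have : NeZero k := ⟨by omega⟩
  have : Fact (1 < k) := ⟨by omega⟩
  have hcard : Fintype.card (ZMod k × Fin 4) = 4 * k := by simp [ZMod.card, mul_comm]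
  let ι := ((k4Necklace k).overFinIso hcard).symm
  have local_shape : ∀ v, ((k4Necklace k).overFin hcard).InducesK3PlusK1
      (((k4Necklace k).overFin hcard).neighborSet v) := fun v => by
    simpa [ι.symm.image_neighborSet] using
      (k4Necklace.inducesK3PlusK1_neighborSet (ι v)).image ι.symm
  exact ⟨_, ι.connected_iff.mpr (k4Necklace.connected k),
    (k4Necklace.isVertexTransitive k).of_iso ι, fun v => (local_shape v).ncard_eq_four,
    local_shape, fun v => (local_shape v).not_exists_two_disjoint_nonadj⟩
end

section
/- If I is an independent set of vertices in a simple graph G and u, v ∈ I are both DP-removable, then DP-removing u and then v yields the same set of possible resulting graphs as DP-removing v and then u (the two removal operations commute). -/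
/-!
A matching chosen at `u` lies in `Γ(u)`, so it avoids the non-neighbour `v` (and vice versa).
Hence removing `u` leaves `Γ(v)` unchanged and the two edge modifications commute. The one
non-local condition is that added pairs be non-edges: a pair added at `v` after removing `u` is
neither an edge of `G` nor a pair added at `u`, which keeps both matchings admissible in the
other order.
-/

/-- DP-removal of an (even-degree) vertex `w`: choose a matching `M` of size `d(w)/2` in
the complement of the induced subgraph on the neighborhood of `w`, delete `w` together
with its incident edges, and add the pairs of `M` as new edges. -/
def DPRemove {V : Type*} (G : SimpleGraph V) (w : V) (G' : SimpleGraph V) : Prop :=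
  ∃ M : Finset (Sym2 V),
    (∀ e ∈ M, ¬ e.IsDiag ∧ e ∉ G.edgeSet ∧ ∀ v ∈ e, v ∈ G.neighborSet w) ∧
    ((M : Set (Sym2 V)).Pairwise fun e f => ∀ v, v ∈ e → v ∉ f) ∧
    2 * M.card = (G.neighborSet w).ncard ∧
    G' = SimpleGraph.fromEdgeSet ((G.edgeSet \ G.incidenceSet w) ∪ ↑M)

section Rewire

variable {V : Type*} {G : SimpleGraph V} {u v w : V} {M N : Finset (Sym2 V)}

def rewire (G : SimpleGraph V) (w : V) (M : Finset (Sym2 V)) : SimpleGraph V :=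
  SimpleGraph.fromEdgeSet ((G.edgeSet \ G.incidenceSet w) ∪ ↑M)

lemma rewire_adj {a b : V} :
    (rewire G w M).Adj a b ↔ ((G.Adj a b ∧ w ≠ a ∧ w ≠ b) ∨ s(a, b) ∈ M) ∧ a ≠ b := by
  simp only [rewire, SimpleGraph.fromEdgeSet_adj, Set.mem_union, Set.mem_sdiff,
    SimpleGraph.mem_edgeSet, SimpleGraph.mk'_mem_incidenceSet_iff, Finset.mem_coe]
  tauto

lemma mem_edgeSet_rewire {e : Sym2 V} :
    e ∈ (rewire G w M).edgeSet ↔ ((e ∈ G.edgeSet ∧ w ∉ e) ∨ e ∈ M) ∧ ¬ e.IsDiag := by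
  simp only [rewire, SimpleGraph.edgeSet_fromEdgeSet, Set.mem_sdiff, Set.mem_union,
    SimpleGraph.incidenceSet, Set.mem_sep_iff, Finset.mem_coe]
  tauto

lemma neighborSet_rewire (hwv : w ≠ v) (hadj : ¬ G.Adj w v) (hM : ∀ e ∈ M, v ∉ e) :
    (rewire G w M).neighborSet v = G.neighborSet v := by
  ext x
  simp only [SimpleGraph.mem_neighborSet, rewire_adj]
  refine ⟨?_, fun h => ⟨Or.inl ⟨h, hwv, ?_⟩, h.ne⟩⟩
  · rintro ⟨⟨h, -⟩ | hm, -⟩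
    · exact h
    · exact absurd (Sym2.mem_mk_left v x) (hM _ hm)
  · rintro rfl
    exact hadj h.symm

lemma rewire_comm (hM : ∀ e ∈ M, v ∉ e) (hN : ∀ e ∈ N, u ∉ e) :
    rewire (rewire G u M) v N = rewire (rewire G v N) u M := by
  ext a b
  simp only [rewire_adj]
  have hMab : s(a, b) ∈ M → v ≠ a ∧ v ≠ b := fun hm =>
    ⟨fun h => hM _ hm (h ▸ Sym2.mem_mk_left a b), fun h => hM _ hm (h ▸ Sym2.mem_mk_right a b)⟩
  have hNab : s(a, b) ∈ N → u ≠ a ∧ u ≠ b := fun hn =>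
    ⟨fun h => hN _ hn (h ▸ Sym2.mem_mk_left a b), fun h => hN _ hn (h ▸ Sym2.mem_mk_right a b)⟩
  tauto

end Rewire

lemma DPRemove.exists_swap {V : Type*} {G G₁ H : SimpleGraph V} {u v : V}
    (huv : u ≠ v) (hadj : ¬ G.Adj u v) (h₁ : DPRemove G u G₁) (h₂ : DPRemove G₁ v H) :
    ∃ G₂, DPRemove G v G₂ ∧ DPRemove G₂ u H := by
  obtain ⟨M, hM, hMpair, hMcard, rfl⟩ := h₁
  obtain ⟨N, hN, hNpair, hNcard, rfl⟩ := h₂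
  have hMv : ∀ e ∈ M, v ∉ e := fun e he hv => hadj ((hM e he).2.2 v hv)
  have hΓv : (rewire G u M).neighborSet v = G.neighborSet v := neighborSet_rewire huv hadj hMv
  have hNΓ : ∀ e ∈ N, ∀ x ∈ e, x ∈ G.neighborSet v := fun e he => hΓv ▸ (hN e he).2.2
  have hNu : ∀ e ∈ N, u ∉ e := fun e he hu => hadj (hNΓ e he u hu).symm
  have hN_nonedge : ∀ e ∈ N, e ∉ G.edgeSet ∧ e ∉ M := by
    intro e he
    have h : e ∉ (rewire G u M).edgeSet := (hN e he).2.1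
    rw [mem_edgeSet_rewire] at h
    exact ⟨fun hG => h ⟨Or.inl ⟨hG, hNu e he⟩, (hN e he).1⟩, fun hm => h ⟨Or.inr hm, (hN e he).1⟩⟩
  have hΓu : (rewire G v N).neighborSet u = G.neighborSet u :=
    neighborSet_rewire huv.symm (fun h => hadj h.symm) hNu
  have hM_nonedge : ∀ e ∈ M, e ∉ (rewire G v N).edgeSet := by
    intro e he h
    rcases (mem_edgeSet_rewire.mp h).1 with ⟨hG, -⟩ | hn
    · exact (hM e he).2.1 hG
    · exact (hN_nonedge e hn).2 he
  refine ⟨rewire G v N,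
    ⟨N, fun e he => ⟨(hN e he).1, (hN_nonedge e he).1, hNΓ e he⟩, hNpair, hΓv ▸ hNcard, rfl⟩,
    ⟨M, fun e he => ⟨(hM e he).1, hM_nonedge e he, hΓu ▸ (hM e he).2.2⟩, hMpair, hΓu ▸ hMcard,
      rewire_comm hMv hNu⟩⟩

theorem dp_removal_commutes_general {V : Type*}
    (G : SimpleGraph V) (I : Set V)
    (hI : ∀ a ∈ I, ∀ b ∈ I, a ≠ b → ¬ G.Adj a b)
    (u v : V) (hu : u ∈ I) (hv : v ∈ I) (huv : u ≠ v) :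
    {H : SimpleGraph V | ∃ G₁, DPRemove G u G₁ ∧ DPRemove G₁ v H} =
    {H : SimpleGraph V | ∃ G₂, DPRemove G v G₂ ∧ DPRemove G₂ u H} := by
  ext H
  constructor
  · rintro ⟨G₁, h₁, h₂⟩
    exact h₁.exists_swap huv (hI u hu v hv huv) h₂
  · rintro ⟨G₂, h₂, h₁⟩
    exact h₂.exists_swap huv.symm (hI v hv u hu huv.symm) h₁

/-- If `I` is an independent set and `u, v ∈ I` are both DP-removable, then DP-removing
`u` then `v` yields exactly the same possible resulting graphs as DP-removing `v` then
`u`: the two removal operations commute. -/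
theorem dp_removal_commutes {V : Type*} [Fintype V] [DecidableEq V]
    (G : SimpleGraph V) (I : Set V)
    (hI : ∀ a ∈ I, ∀ b ∈ I, a ≠ b → ¬ G.Adj a b)
    (u v : V) (hu : u ∈ I) (hv : v ∈ I) (huv : u ≠ v)
    (hru : ∃ G₁, DPRemove G u G₁) (hrv : ∃ G₂, DPRemove G v G₂) :
    {H : SimpleGraph V | ∃ G₁, DPRemove G u G₁ ∧ DPRemove G₁ v H} =
    {H : SimpleGraph V | ∃ G₂, DPRemove G v G₂ ∧ DPRemove G₂ u H} :=
  dp_removal_commutes_general G I hI u v hu hv huv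
end

section
/- If a simple graph G on n vertices has a power-law distribution-bounded degree sequence with parameters γ > 2 and C > 0 (i.e., D_{≥i}(G) ≤ C·n·ζ(γ,i) for all i ≥ 1, where ζ(γ,i) = Σ_{j=i}^∞ j^{−γ}) and |E(G)| ≥ n/2, then ν(G) ≥ n · max_{2 ≤ q < n} ( 1/2 − (C/(γ−2))·(q−1)^{2−γ} ) / (q+1), where the maximum is over integers q with 2 ≤ q < n. -/
set_option linter.unusedSectionVars false
set_option maxHeartbeats 1000000

namespace VizingAux


variable {V : Type*} [Fintype V] [DecidableEq V]

/-- A proper partial edge coloring of `H` with colors `< N`. -/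
structure PC (H : SimpleGraph V) (N : ℕ) where
  col : Sym2 V → Option ℕ
  mem_edge : ∀ e, col e ≠ none → e ∈ H.edgeSet
  lt : ∀ e k, col e = some k → k < N
  proper : ∀ (a b₁ b₂ : V), b₁ ≠ b₂ → col s(a, b₁) ≠ none → col s(a, b₁) ≠ col s(a, b₂)

variable {H : SimpleGraph V} {N : ℕ}

/-- color `k` does not appear on any edge at `v`. -/
def free (pc : PC H N) (k : ℕ) (v : V) : Prop := ∀ b : V, pc.col s(v, b) ≠ some k

lemma PC.some_inj (pc : PC H N) {a b₁ b₂ : V} {k : ℕ} (h1 : pc.col s(a, b₁) = some k)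
    (h2 : pc.col s(a, b₂) = some k) : b₁ = b₂ := by
  by_contra hne
  exact pc.proper a b₁ b₂ hne (by simp [h1]) (h1.trans h2.symm)

lemma PC.diag_none (pc : PC H N) (a : V) : pc.col s(a, a) = none := by
  by_contra h
  exact H.irrefl (pc.mem_edge _ h)

lemma exists_free [DecidableRel H.Adj] (pc : PC H N) (v : V) (h : H.degree v < N) :
    ∃ k, k < N ∧ free pc k v := by
  classical
  set U : Finset (Option ℕ) := (H.neighborFinset v).image (fun b => pc.col s(v, b)) with hU
  by_contra hcon
  push_neg at hcon
  have hsub : (Finset.range N).image some ⊆ U := by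
    intro o ho
    simp only [Finset.mem_image, Finset.mem_range] at ho
    obtain ⟨k, hk, rfl⟩ := ho
    obtain ⟨b, hb⟩ : ∃ b, pc.col s(v, b) = some k := by
      have := hcon k hk
      simp only [free, not_forall, not_not] at this
      exact this
    have hadj : H.Adj v b := (H.mem_edgeSet).1 (pc.mem_edge _ (by simp [hb]))
    exact Finset.mem_image.2 ⟨b, (H.mem_neighborFinset v b).2 hadj, hb⟩
  have h1 : N ≤ U.card := by
    have := Finset.card_le_card hsub
    rwa [Finset.card_image_of_injective _ (Option.some_injective ℕ), Finset.card_range] at this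
  have h2 : U.card ≤ H.degree v := Finset.card_image_le
  omega

/-- Color one edge with a color free at both endpoints. -/
def setEdge (pc : PC H N) (a b : V) (hab : H.Adj a b) (k : ℕ) (hk : k < N)
    (ha : free pc k a) (hb : free pc k b) : PC H N where
  col e := if e = s(a, b) then some k else pc.col e
  mem_edge := by
    intro e he
    by_cases h : e = s(a, b)
    · subst h; exact H.mem_edgeSet.2 hab
    · simp only [h, if_false] at he; exact pc.mem_edge e he
  lt := by
    intro e m he
    by_cases h : e = s(a, b)
    · simp only [h, if_true] at he
      exact (Option.some_inj.mp he) ▸ hk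
    · simp only [h, if_false] at he; exact pc.lt e m he
  proper := by
    intro x y₁ y₂ hne h1
    by_cases e1 : s(x, y₁) = s(a, b) <;> by_cases e2 : s(x, y₂) = s(a, b)
    · exact absurd (Sym2.congr_right.mp (e1.trans e2.symm)) hne
    · simp only [e1, e2, if_true, if_false]
      have hx : x = a ∨ x = b := by
        rw [Sym2.eq_iff] at e1
        rcases e1 with ⟨h, _⟩ | ⟨h, _⟩
        · exact Or.inl h
        · exact Or.inr h
      rcases hx with rfl | rfl
      · exact fun hcon => ha y₂ hcon.symm
      · exact fun hcon => hb y₂ hcon.symm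
    · simp only [e1, e2, if_true, if_false] at h1 ⊢
      have hx : x = a ∨ x = b := by
        rw [Sym2.eq_iff] at e2
        rcases e2 with ⟨h, _⟩ | ⟨h, _⟩
        · exact Or.inl h
        · exact Or.inr h
      rcases hx with rfl | rfl
      · exact fun hcon => ha y₁ hcon
      · exact fun hcon => hb y₁ hcon
    · simp only [e1, e2, if_false] at h1 ⊢
      exact pc.proper x y₁ y₂ hne h1

lemma setEdge_self (pc : PC H N) (a b : V) (hab) (k) (hk) (ha) (hb) :
    (setEdge pc a b hab k hk ha hb).col s(a, b) = some k := by simp [setEdge]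

lemma setEdge_other (pc : PC H N) (a b : V) (hab) (k) (hk) (ha) (hb) (e : Sym2 V)
    (he : e ≠ s(a, b)) : (setEdge pc a b hab k hk ha hb).col e = pc.col e := by
  simp [setEdge, he]

lemma setEdge_support (pc : PC H N) (a b : V) (hab) (k) (hk) (ha) (hb) (e : Sym2 V) :
    (setEdge pc a b hab k hk ha hb).col e ≠ none ↔ (e = s(a, b) ∨ pc.col e ≠ none) := by
  by_cases h : e = s(a, b) <;> simp [setEdge, h]


/-- Hypotheses making `y 0, …, y k` a "fan" around `x`. -/
structure FanHyp (pc : PC H N) (x : V) (y : ℕ → V) (k : ℕ) : Prop where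
  adj : ∀ i, i ≤ k → H.Adj x (y i)
  inj : ∀ i, i ≤ k → ∀ j, j ≤ k → y i = y j → i = j
  colored : ∀ i, 1 ≤ i → i ≤ k → pc.col s(x, y i) ≠ none
  fan : ∀ i c, i < k → pc.col s(x, y (i + 1)) = some c → free pc c (y i)

section Rotate

open Classical in
/-- the coloring after rotating the fan down to index `r`. -/
noncomputable def rcol (pc : PC H N) (x : V) (y : ℕ → V) (r : ℕ) (e : Sym2 V) : Option ℕ :=
  if h : ∃ i, i ≤ r ∧ e = s(x, y i) then
    (if Classical.choose h < r then pc.col s(x, y (Classical.choose h + 1)) else none)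
  else pc.col e

variable (pc : PC H N) {x : V} {y : ℕ → V} {k r : ℕ}
  (hr : r ≤ k) (F : FanHyp pc x y k)

include F in
lemma yne (i : ℕ) (hi : i ≤ k) : y i ≠ x := (F.adj i hi).ne'

include hr F in
lemma rcol_fan {i : ℕ} (hi : i ≤ r) :
    rcol pc x y r s(x, y i) = if i < r then pc.col s(x, y (i + 1)) else none := by
  have h : ∃ i', i' ≤ r ∧ s(x, y i) = s(x, y i') := ⟨i, hi, rfl⟩
  have hspec := Classical.choose_spec h
  have : Classical.choose h = i := by
    have := Sym2.congr_right.mp hspec.2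
    exact (F.inj _ (le_trans hspec.1 hr) _ (le_trans hi hr) this.symm)
  rw [rcol, dif_pos h, this]

lemma rcol_other {e : Sym2 V} (he : ∀ i, i ≤ r → e ≠ s(x, y i)) :
    rcol pc x y r e = pc.col e := by
  rw [rcol, dif_neg]
  rintro ⟨i, hi, rfl⟩
  exact he i hi rfl

include hr F in
lemma rcol_nonx {a b : V} (ha : a ≠ x) (hb : b ≠ x) :
    rcol pc x y r s(a, b) = pc.col s(a, b) := by
  apply rcol_other
  intro i hi hcon
  rw [Sym2.eq_iff] at hcon
  rcases hcon with ⟨h, _⟩ | ⟨_, h⟩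
  · exact ha h
  · exact hb h

include hr F in
/-- The rotated coloring is a proper partial coloring. -/
noncomputable def rotate : PC H N where
  col := rcol pc x y r
  mem_edge := by
    intro e he
    by_cases h : ∃ i, i ≤ r ∧ e = s(x, y i)
    · obtain ⟨i, hi, rfl⟩ := h
      exact H.mem_edgeSet.2 (F.adj i (le_trans hi hr))
    · rw [rcol_other pc (fun i hi hcon => h ⟨i, hi, hcon⟩)] at he
      exact pc.mem_edge e he
  lt := by
    intro e m he
    by_cases h : ∃ i, i ≤ r ∧ e = s(x, y i)
    · obtain ⟨i, hi, rfl⟩ := h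
      rw [rcol_fan pc hr F hi] at he
      by_cases hir : i < r
      · rw [if_pos hir] at he; exact pc.lt _ m he
      · rw [if_neg hir] at he; exact absurd he (by simp)
    · rw [rcol_other pc (fun i hi hcon => h ⟨i, hi, hcon⟩)] at he
      exact pc.lt e m he
  proper := by
    intro a b₁ b₂ hne h1
    have hedne : s(a, b₁) ≠ s(a, b₂) := fun hcon => hne (Sym2.congr_right.mp hcon)
    by_cases hf1 : ∃ i, i ≤ r ∧ s(a, b₁) = s(x, y i) <;>
      by_cases hf2 : ∃ i, i ≤ r ∧ s(a, b₂) = s(x, y i)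
    · obtain ⟨i₁, hi₁, he₁⟩ := hf1
      obtain ⟨i₂, hi₂, he₂⟩ := hf2
      rw [he₁] at h1 ⊢
      rw [he₂]
      rw [rcol_fan pc hr F hi₁] at h1 ⊢
      rw [rcol_fan pc hr F hi₂]
      have hii : i₁ ≠ i₂ := by
        intro hcon; subst hcon; exact hedne (he₁.trans he₂.symm)
      by_cases h1r : i₁ < r
      · rw [if_pos h1r] at h1 ⊢
        by_cases h2r : i₂ < r
        · rw [if_pos h2r]
          intro hcon
          obtain ⟨c, hc⟩ := Option.ne_none_iff_exists'.mp h1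
          have hc2 : pc.col s(x, y (i₂ + 1)) = some c := hcon.symm.trans hc
          have := pc.some_inj hc hc2
          have := F.inj _ (by omega) _ (by omega) this
          omega
        · rw [if_neg h2r]; exact h1
      · rw [if_neg h1r] at h1; exact absurd rfl h1
    · -- e₁ fan, e₂ not
      obtain ⟨i₁, hi₁, he₁⟩ := hf1
      have ho2 : rcol pc x y r s(a, b₂) = pc.col s(a, b₂) :=
        rcol_other pc (fun i hi hcon => hf2 ⟨i, hi, hcon⟩)
      rw [he₁, rcol_fan pc hr F hi₁] at h1 ⊢
      rw [ho2]
      by_cases h1r : i₁ < r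
      · rw [if_pos h1r] at h1 ⊢
        obtain ⟨c, hc⟩ := Option.ne_none_iff_exists'.mp h1
        rw [hc]
        rw [Sym2.eq_iff] at he₁
        intro hcon
        rcases he₁ with ⟨hax, hb⟩ | ⟨hay, hbx⟩
        · subst hax
          have := pc.some_inj hc hcon.symm
          exact hf2 ⟨i₁ + 1, by omega, by rw [this]⟩
        · subst hbx
          have hfree := F.fan i₁ c (lt_of_lt_of_le h1r hr) hc
          rw [← hay] at hfree
          exact hfree b₂ hcon.symm
      · rw [if_neg h1r] at h1; exact absurd rfl h1
    · -- e₂ fan, e₁ not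
      obtain ⟨i₂, hi₂, he₂⟩ := hf2
      have ho1 : rcol pc x y r s(a, b₁) = pc.col s(a, b₁) :=
        rcol_other pc (fun i hi hcon => hf1 ⟨i, hi, hcon⟩)
      rw [ho1] at h1 ⊢
      rw [he₂, rcol_fan pc hr F hi₂]
      by_cases h2r : i₂ < r
      · rw [if_pos h2r]
        intro hcon
        have h2c : pc.col s(x, y (i₂ + 1)) ≠ none := F.colored (i₂+1) (by omega) (by omega)
        obtain ⟨c, hc⟩ := Option.ne_none_iff_exists'.mp h2c
        rw [hc] at hcon
        rw [Sym2.eq_iff] at he₂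
        rcases he₂ with ⟨hax, hb⟩ | ⟨hay, hbx⟩
        · subst hax
          have := pc.some_inj hcon hc
          exact hf1 ⟨i₂ + 1, by omega, by rw [this]⟩
        · subst hbx
          have hfree := F.fan i₂ c (lt_of_lt_of_le h2r hr) hc
          rw [← hay] at hfree
          exact hfree b₁ hcon
      · rw [if_neg h2r]
        intro hcon; exact h1 hcon
    · rw [rcol_other pc (fun i hi hcon => hf1 ⟨i, hi, hcon⟩)] at h1 ⊢
      rw [rcol_other pc (fun i hi hcon => hf2 ⟨i, hi, hcon⟩)]
      exact pc.proper a b₁ b₂ hne h1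

include hr F in
lemma rotate_col : (rotate pc hr F).col = rcol pc x y r := rfl

include hr F in
lemma rot_free_x {c : ℕ} (hc : free pc c x) : free (rotate pc hr F) c x := by
  intro b hcon
  rw [rotate_col] at hcon
  by_cases h : ∃ i, i ≤ r ∧ s(x, b) = s(x, y i)
  · obtain ⟨i, hi, he⟩ := h
    rw [he, rcol_fan pc hr F hi] at hcon
    by_cases hir : i < r
    · rw [if_pos hir] at hcon; exact hc _ hcon
    · rw [if_neg hir] at hcon; exact absurd hcon (by simp)
  · rw [rcol_other pc (fun i hi hcon' => h ⟨i, hi, hcon'⟩)] at hcon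
    exact hc _ hcon

include hr F in
lemma rot_free_yr {c : ℕ} (hc : free pc c (y r)) : free (rotate pc hr F) c (y r) := by
  intro b hcon
  rw [rotate_col] at hcon
  by_cases h : ∃ i, i ≤ r ∧ s(y r, b) = s(x, y i)
  · obtain ⟨i, hi, he⟩ := h
    rw [Sym2.eq_iff] at he
    rcases he with ⟨hax, _⟩ | ⟨hay, hbx⟩
    · exact yne pc F r hr hax
    · have : i = r := F.inj i (le_trans hi hr) r hr hay.symm
      subst this
      have : s(y i, b) = s(x, y i) := by rw [hbx]; exact Sym2.eq_swap
      rw [this, rcol_fan pc hr F hi, if_neg (lt_irrefl i)] at hcon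
      exact absurd hcon (by simp)
  · rw [rcol_other pc (fun i hi hcon' => h ⟨i, hi, hcon'⟩)] at hcon
    exact hc _ hcon

include hr F in
lemma rotate_support (e : Sym2 V) :
    (rotate pc hr F).col e ≠ none ↔
      ((∃ i, i < r ∧ e = s(x, y i)) ∨
        ((∀ i, i ≤ r → e ≠ s(x, y i)) ∧ pc.col e ≠ none)) := by
  rw [rotate_col]
  by_cases h : ∃ i, i ≤ r ∧ e = s(x, y i)
  · obtain ⟨i, hi, rfl⟩ := h
    rw [rcol_fan pc hr F hi]
    by_cases hir : i < r
    · rw [if_pos hir]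
      constructor
      · intro _; exact Or.inl ⟨i, hir, rfl⟩
      · intro _; exact F.colored (i+1) (by omega) (by omega)
    · have hireq : i = r := by omega
      rw [if_neg hir]
      constructor
      · intro hcon; exact absurd rfl hcon
      · rintro (⟨i', hi', he'⟩ | ⟨hall, _⟩)
        · have := F.inj i (le_trans hi hr) i' (le_trans (le_of_lt hi') hr)
            (Sym2.congr_right.mp he')
          omega
        · exact absurd rfl (hall i hi)
  · rw [rcol_other pc (fun i hi hcon' => h ⟨i, hi, hcon'⟩)]
    constructor
    · intro hne; exact Or.inr ⟨fun i hi hcon' => h ⟨i, hi, hcon'⟩, hne⟩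
    · rintro (⟨i', hi', he'⟩ | ⟨_, hne⟩)
      · exact absurd ⟨i', le_of_lt hi', he'⟩ h
      · exact hne

include hr F in
lemma rotate_eval_lt {i : ℕ} (hi : i < r) :
    (rotate pc hr F).col s(x, y i) = pc.col s(x, y (i + 1)) := by
  rw [rotate_col, rcol_fan pc hr F (le_of_lt hi), if_pos hi]

include hr F in
lemma rotate_eval_r : (rotate pc hr F).col s(x, y r) = none := by
  rw [rotate_col, rcol_fan pc hr F le_rfl, if_neg (lt_irrefl r)]

include hr F in
lemma rotate_nonx {a b : V} (ha : a ≠ x) (hb : b ≠ x) :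
    (rotate pc hr F).col s(a, b) = pc.col s(a, b) := by
  rw [rotate_col]; exact rcol_nonx pc hr F ha hb

include hr F in
lemma rotate_other {e : Sym2 V} (he : ∀ i, i ≤ r → e ≠ s(x, y i)) :
    (rotate pc hr F).col e = pc.col e := by
  rw [rotate_col]; exact rcol_other pc he

end Rotate

section Kempe

variable (pc : PC H N) (α β : ℕ)

/-- the graph of edges colored `α` or `β`. -/
def kgraph : SimpleGraph V where
  Adj u w := (pc.col s(u, w) = some α ∨ pc.col s(u, w) = some β) ∧ u ≠ w
  symm := by
    constructor; intro u w ⟨h, hne⟩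
    refine ⟨?_, hne.symm⟩
    rwa [Sym2.eq_swap]
  loopless := ⟨fun u h => h.2 rfl⟩

/-- swap of the two colors on `Option ℕ`. -/
def kσ (o : Option ℕ) : Option ℕ :=
  if o = some α then some β else if o = some β then some α else o

lemma kσ_none : kσ α β none = none := by simp [kσ]

lemma kσ_ne_none {o : Option ℕ} (h : o ≠ none) : kσ α β o ≠ none := by
  unfold kσ
  split_ifs <;> simp_all

lemma kσ_inj (hab : α ≠ β) {o₁ o₂ : Option ℕ} (h : kσ α β o₁ = kσ α β o₂) : o₁ = o₂ := by
  unfold kσ at h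
  split_ifs at h <;> simp_all

variable (v₀ : V) (hα : α < N) (hβ : β < N) (hab : α ≠ β)

open Classical in
noncomputable def scol (e : Sym2 V) : Option ℕ :=
  if (pc.col e = some α ∨ pc.col e = some β) ∧ (∃ u ∈ e, (kgraph pc α β).Reachable v₀ u) then
    kσ α β (pc.col e)
  else pc.col e

/-- closure: an αβ-edge at a reachable-from-the-other-endpoint vertex makes the vertex reachable -/
lemma reach_of_touch {a b : V} (hcol : pc.col s(a, b) = some α ∨ pc.col s(a, b) = some β)
    (htouch : ∃ u ∈ s(a, b), (kgraph pc α β).Reachable v₀ u) :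
    (kgraph pc α β).Reachable v₀ a := by
  obtain ⟨u, hu, hru⟩ := htouch
  rw [Sym2.mem_iff] at hu
  rcases hu with rfl | rfl
  · exact hru
  · by_cases hba : u = a
    · exact hba ▸ hru
    · refine hru.trans ?_
      exact SimpleGraph.Adj.reachable ⟨by rwa [Sym2.eq_swap], hba⟩

lemma scol_eval_reach {a : V} (hra : (kgraph pc α β).Reachable v₀ a) (b : V) :
    scol pc α β v₀ s(a, b) = kσ α β (pc.col s(a, b)) := by
  unfold scol
  by_cases hcol : pc.col s(a, b) = some α ∨ pc.col s(a, b) = some β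
  · rw [if_pos ⟨hcol, a, Sym2.mem_mk_left a b, hra⟩]
  · rw [if_neg (fun hcon => hcol hcon.1)]
    push_neg at hcol
    unfold kσ
    rw [if_neg hcol.1, if_neg hcol.2]

lemma scol_eval_unreach {a : V} (hra : ¬ (kgraph pc α β).Reachable v₀ a) (b : V) :
    scol pc α β v₀ s(a, b) = pc.col s(a, b) := by
  unfold scol
  rw [if_neg]
  rintro ⟨hcol, htouch⟩
  exact hra (reach_of_touch pc α β v₀ hcol htouch)

lemma scol_support (e : Sym2 V) : scol pc α β v₀ e ≠ none ↔ pc.col e ≠ none := by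
  unfold scol
  split_ifs with h
  · constructor
    · intro _; rcases h.1 with h' | h' <;> simp [h']
    · intro h'; exact kσ_ne_none α β h'
  · exact Iff.rfl

include hα hβ hab in
noncomputable def kswap : PC H N where
  col := scol pc α β v₀
  mem_edge := by
    intro e he
    rw [scol_support] at he
    exact pc.mem_edge e he
  lt := by
    intro e m he
    unfold scol at he
    split_ifs at he with h
    · unfold kσ at he
      split_ifs at he with h1 h2
      · exact (Option.some_inj.mp he) ▸ hβ
      · exact (Option.some_inj.mp he) ▸ hα
      · exact pc.lt e m he
    · exact pc.lt e m he
  proper := by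
    intro a b₁ b₂ hne h1
    by_cases hra : (kgraph pc α β).Reachable v₀ a
    · rw [scol_eval_reach pc α β v₀ hra] at h1 ⊢
      rw [scol_eval_reach pc α β v₀ hra]
      have hpc1 : pc.col s(a, b₁) ≠ none := by
        intro hcon; rw [hcon, kσ_none] at h1; exact h1 rfl
      intro hcon
      exact pc.proper a b₁ b₂ hne hpc1 (kσ_inj α β hab hcon)
    · rw [scol_eval_unreach pc α β v₀ hra] at h1 ⊢
      rw [scol_eval_unreach pc α β v₀ hra]
      exact pc.proper a b₁ b₂ hne h1

lemma kswap_col : (kswap pc α β v₀ hα hβ hab).col = scol pc α β v₀ := rfl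

/-- at an unreachable vertex nothing changes -/
lemma kswap_unreach {a : V} (hra : ¬ (kgraph pc α β).Reachable v₀ a) (b : V) :
    (kswap pc α β v₀ hα hβ hab).col s(a, b) = pc.col s(a, b) :=
  scol_eval_unreach pc α β v₀ hra b

/-- at a reachable vertex, freedom of α before gives freedom of β after -/
lemma kswap_free₁ {a : V} (hra : (kgraph pc α β).Reachable v₀ a)
    (hfree : free pc α a) : free (kswap pc α β v₀ hα hβ hab) β a := by
  intro b hcon
  rw [kswap_col, scol_eval_reach pc α β v₀ hra] at hcon
  unfold kσ at hcon
  split_ifs at hcon with h1 h2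
  · exact hfree b h1
  · exact hab (Option.some_inj.mp hcon)
  · exact h2 hcon

/-- at a reachable vertex, freedom of β before gives freedom of α after -/
lemma kswap_free₂ {a : V} (hra : (kgraph pc α β).Reachable v₀ a)
    (hfree : free pc β a) : free (kswap pc α β v₀ hα hβ hab) α a := by
  intro b hcon
  rw [kswap_col, scol_eval_reach pc α β v₀ hra] at hcon
  unfold kσ at hcon
  split_ifs at hcon with h1 h2
  · exact hab (Option.some_inj.mp hcon).symm
  · exact hfree b h2
  · exact h1 hcon

lemma kswap_support (e : Sym2 V) :
    (kswap pc α β v₀ hα hβ hab).col e ≠ none ↔ pc.col e ≠ none := by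
  rw [kswap_col]; exact scol_support pc α β v₀ e

end Kempe



open SimpleGraph

variable {V : Type*} [Fintype V] [DecidableEq V]

lemma reach_avoid (A BB : SimpleGraph V) (x z : V)
    (hiff : ∀ u w, u ≠ x → w ≠ x → (A.Adj u w ↔ BB.Adj u w))
    (huniq : ∀ b, A.Adj x b → b = z) :
    ∀ (n : ℕ) (u v : V) (p : A.Walk u v), p.length = n → u ≠ x → v ≠ x →
      BB.Reachable u v := by
  intro n
  induction n using Nat.strong_induction_on with
  | _ n ih =>
    intro u v p hlen hu hv
    cases p with
    | nil => exact Reachable.refl u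
    | @cons _ a _ hadj p' =>
      by_cases ha : a = x
      · cases p' with
        | nil => exact absurd ha hv
        | @cons _ b _ hxb p'' =>
          rw [ha] at hxb hadj
          have hbz : b = z := huniq b hxb
          have huz : u = z := huniq u hadj.symm
          have hbx : b ≠ x := hxb.ne'
          have hl2 : p''.length + 2 = n := by simpa using hlen
          have hr : BB.Reachable b v := ih p''.length (by omega) b v p'' rfl hbx hv
          rwa [huz, ← hbz]
      · have hl1 : p'.length + 1 = n := by simpa using hlen
        have h1 : BB.Adj u a := (hiff u a hu ha).1 hadj
        have h2 : BB.Reachable a v := ih p'.length (by omega) a v p' rfl ha hv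
        exact (h1.reachable).trans h2

lemma reach_from_x (A BB : SimpleGraph V) (x z : V)
    (hiff : ∀ u w, u ≠ x → w ≠ x → (A.Adj u w ↔ BB.Adj u w))
    (huniq : ∀ b, A.Adj x b → b = z)
    {v : V} (h : A.Reachable x v) (hv : v ≠ x) : BB.Reachable z v := by
  obtain ⟨p⟩ := h
  cases p with
  | nil => exact absurd rfl hv
  | @cons _ a _ hadj p' =>
    have haz : a = z := huniq a hadj
    have hax : a ≠ x := hadj.ne'
    have := reach_avoid A BB x z hiff huniq p'.length a v p' rfl hax hv
    rwa [haz] at this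

lemma path_prefix (BB : SimpleGraph V) [DecidableRel BB.Adj]
    (hdeg2 : ∀ a, BB.degree a ≤ 2) :
    ∀ (n : ℕ) (a v w : V) (p : BB.Walk a v) (q : BB.Walk a w) (op : Option V),
      p.IsPath → q.IsPath → p.length = n → p.length ≤ q.length →
      (∀ z, op = some z → z ∉ p.support ∧ z ∉ q.support) →
      (∀ b c, BB.Adj a b → BB.Adj a c → op ≠ some b → op ≠ some c → b = c) →
      v ∈ q.support := by
  intro n
  induction n with
  | zero =>
    intro a v w p q op hp hq hlen _ _ _
    have : a = v := by
      cases p with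
      | nil => rfl
      | cons _ _ => simp at hlen
    exact this ▸ q.start_mem_support
  | succ n ih =>
    intro a v w p q op hp hq hlen hle hop huniq
    cases p with
    | nil => simp at hlen
    | @cons _ b _ hab p' =>
      cases q with
      | nil => simp at hle
      | @cons _ c _ hac q' =>
        have hbmem : b ∈ p'.support := p'.start_mem_support
        have hcmem : c ∈ q'.support := q'.start_mem_support
        have hopb : op ≠ some b := by
          intro hcon
          exact ((hop b hcon).1) (by simp [hbmem])
        have hopc : op ≠ some c := by
          intro hcon
          exact ((hop c hcon).2) (by simp [hcmem])
        have hbc : b = c := huniq b c hab hac hopb hopc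
        subst hbc
        have hp' : p'.IsPath := ((SimpleGraph.Walk.cons_isPath_iff _ _).1 hp).1
        have hq' : q'.IsPath := ((SimpleGraph.Walk.cons_isPath_iff _ _).1 hq).1
        have hanp : a ∉ p'.support := ((SimpleGraph.Walk.cons_isPath_iff _ _).1 hp).2
        have hanq : a ∉ q'.support := ((SimpleGraph.Walk.cons_isPath_iff _ _).1 hq).2
        have hvmem : v ∈ q'.support := by
          refine ih b v w p' q' (some a) hp' hq' (by simpa using hlen) (by simpa using hle)
            ?_ ?_
          · rintro z hz
            have : a = z := by injection hz
            subst this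
            exact ⟨hanp, hanq⟩
          · intro d e hbd hbe hda hea
            by_contra hde
            have hda' : d ≠ a := fun hcon => hda (by rw [hcon])
            have hea' : e ≠ a := fun hcon => hea (by rw [hcon])
            have h3 : 2 < (BB.neighborFinset b).card := by
              rw [Finset.two_lt_card]
              exact ⟨a, by simp [hab.symm], d, by simp [hbd], e, by simp [hbe],
                hda'.symm, hea'.symm, hde⟩
            have h4 := hdeg2 b
            rw [← SimpleGraph.card_neighborFinset_eq_degree] at h4
            omega
        rw [SimpleGraph.Walk.support_cons]
        exact List.mem_cons_of_mem _ hvmem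

lemma path3 (BB : SimpleGraph V) [DecidableRel BB.Adj]
    (hdeg2 : ∀ a, BB.degree a ≤ 2)
    {u v w : V} (hdu : BB.degree u ≤ 1) (hdv : BB.degree v ≤ 1) (hdw : BB.degree w ≤ 1)
    (huv : u ≠ v) (huw : u ≠ w) (hvw : v ≠ w)
    (h1 : BB.Reachable u v) (h2 : BB.Reachable u w) : False := by
  obtain ⟨p0⟩ := h1
  obtain ⟨q0⟩ := h2
  have key : ∀ (v w : V), BB.degree v ≤ 1 → ∀ (p : BB.Walk u v) (q : BB.Walk u w),
      p.IsPath → q.IsPath →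
      v ≠ w → u ≠ v → u ≠ w → p.length ≤ q.length → False := by
    intro v w hdv p q hp hq hvw huv huw hle
    have hvq : v ∈ q.support := by
      refine path_prefix BB hdeg2 p.length u v w p q none hp hq rfl hle ?_ ?_
      · rintro z hz; exact absurd hz (by simp)
      · intro b c hub huc _ _
        by_contra hbc
        have h3 : 1 < (BB.neighborFinset u).card := by
          rw [Finset.one_lt_card]
          exact ⟨b, by simp [hub], c, by simp [huc], hbc⟩
        rw [← SimpleGraph.card_neighborFinset_eq_degree] at hdu
        omega
    have hq1p : (q.takeUntil v hvq).IsPath := hq.takeUntil hvq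
    have hq2p : (q.dropUntil v hvq).IsPath := hq.dropUntil hvq
    have hnodup := hq.support_nodup
    rw [← q.take_spec hvq, SimpleGraph.Walk.support_append] at hnodup
    have hdisj := List.disjoint_of_nodup_append hnodup
    obtain ⟨q1, hq1⟩ : ∃ q1 : BB.Walk u v, q1 = q.takeUntil v hvq := ⟨_, rfl⟩
    obtain ⟨q2, hq2⟩ : ∃ q2 : BB.Walk v w, q2 = q.dropUntil v hvq := ⟨_, rfl⟩
    rw [← hq1] at hq1p hdisj
    rw [← hq2] at hq2p hdisj
    obtain ⟨d, hd, hdmem⟩ : ∃ d, BB.Adj v d ∧ d ∈ q1.support := by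
      cases hrev : q1.reverse with
      | nil => exact absurd rfl huv
      | @cons _ d _ hvd r =>
        refine ⟨d, hvd, ?_⟩
        have : d ∈ q1.reverse.support := by
          rw [hrev, SimpleGraph.Walk.support_cons]
          exact List.mem_cons_of_mem _ r.start_mem_support
        rwa [SimpleGraph.Walk.support_reverse, List.mem_reverse] at this
    obtain ⟨e, he, hemem⟩ : ∃ e, BB.Adj v e ∧ e ∈ q2.support.tail := by
      cases hq2c : q2 with
      | nil => exact absurd rfl hvw
      | @cons _ e _ hve r =>
        refine ⟨e, hve, ?_⟩
        rw [SimpleGraph.Walk.support_cons, List.tail_cons]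
        exact r.start_mem_support
    have hde : d ≠ e := by
      intro hcon
      exact hdisj hdmem (hcon ▸ hemem)
    have h3 : 1 < (BB.neighborFinset v).card := by
      rw [Finset.one_lt_card]
      exact ⟨d, by simp [hd], e, by simp [he], hde⟩
    rw [← SimpleGraph.card_neighborFinset_eq_degree] at hdv
    omega
  rcases le_total (p0.toPath : BB.Walk u v).length (q0.toPath : BB.Walk u w).length with hle | hle
  · exact key v w hdv p0.toPath q0.toPath p0.toPath.2 q0.toPath.2 hvw huv huw hle
  · exact key w v hdw q0.toPath p0.toPath q0.toPath.2 p0.toPath.2 (Ne.symm hvw) huw huv hle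



section Extend

variable {H : SimpleGraph V} {N : ℕ}

lemma support_after (pc : PC H N) {x : V} {y : ℕ → V} {k r : ℕ}
    (hr : r ≤ k) (F : FanHyp pc x y k)
    (pc2 : PC H N) (hs2 : ∀ e, pc2.col e ≠ none ↔ (rotate pc hr F).col e ≠ none)
    (pc' : PC H N) (hs3 : ∀ e, pc'.col e ≠ none ↔ (e = s(x, y r) ∨ pc2.col e ≠ none)) :
    pc'.col s(x, y 0) ≠ none ∧
      ∀ e, e ≠ s(x, y 0) → (pc'.col e ≠ none ↔ pc.col e ≠ none) := by
  constructor
  · rw [hs3]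
    rcases Nat.eq_zero_or_pos r with hr0 | hr0
    · exact Or.inl (by rw [hr0])
    · refine Or.inr ?_
      rw [hs2, rotate_support pc hr F]
      exact Or.inl ⟨0, hr0, rfl⟩
  · intro e he
    rw [hs3, hs2, rotate_support pc hr F]
    by_cases hfe : ∃ i, i ≤ r ∧ e = s(x, y i)
    · obtain ⟨i, hi, rfl⟩ := hfe
      have hi0 : 1 ≤ i := by
        rcases Nat.eq_zero_or_pos i with h0 | h0
        · exact absurd (by rw [h0]) he
        · exact h0
      have hrhs : pc.col s(x, y i) ≠ none := F.colored i hi0 (le_trans hi hr)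
      constructor
      · intro _; exact hrhs
      · intro _
        rcases Nat.lt_or_ge i r with hir | hir
        · exact Or.inr (Or.inl ⟨i, hir, rfl⟩)
        · exact Or.inl (by rw [le_antisymm hi hir])
    · push_neg at hfe
      constructor
      · rintro (hcon | (⟨i, hir, hcon⟩ | ⟨_, hcol⟩))
        · exact absurd hcon (hfe r le_rfl)
        · exact absurd hcon (hfe i (le_of_lt hir))
        · exact hcol
      · intro hcol
        exact Or.inr (Or.inr ⟨fun i hi => hfe i hi, hcol⟩)

lemma extend [DecidableRel H.Adj] (pc : PC H N) (hN : ∀ v, H.degree v < N)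
    {x y₀ : V} (hadj : H.Adj x y₀) (hnone : pc.col s(x, y₀) = none) :
    ∃ pc' : PC H N, pc'.col s(x, y₀) ≠ none ∧
      ∀ e, e ≠ s(x, y₀) → (pc'.col e ≠ none ↔ pc.col e ≠ none) := by
  classical
  obtain ⟨α, hαN, hαx⟩ := exists_free pc x (hN x)
  -- maximal fan
  set P : ℕ → Prop := fun k => ∃ y : ℕ → V, y 0 = y₀ ∧ FanHyp pc x y k with hP
  have hP0 : P 0 := by
    refine ⟨fun _ => y₀, rfl, ?_, ?_, ?_, ?_⟩
    · intro i _; exact hadj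
    · intro i hi j hj _; omega
    · intro i hi1 hi0; omega
    · intro i c hi; omega
  have hbound : ∀ m, P m → m < Fintype.card V := by
    rintro m ⟨y, hy0, F⟩
    have hinj : Function.Injective (fun i : Fin (m+1) => y i) := by
      intro i j hij
      have := F.inj i (by omega) j (by omega) hij
      exact Fin.ext this
    have := Fintype.card_le_of_injective _ hinj
    simp only [Fintype.card_fin] at this
    omega
  set k := Nat.findGreatest P (Fintype.card V) with hk
  have hPk : P k := Nat.findGreatest_spec (Nat.zero_le _) hP0
  obtain ⟨y, hy0, F⟩ := hPk
  have hmax : ¬ P (k + 1) := by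
    have hklt : k < Fintype.card V := hbound k ⟨y, hy0, F⟩
    exact Nat.findGreatest_is_greatest
      (show Nat.findGreatest P (Fintype.card V) < k + 1 by rw [← hk]; omega) (by omega)
  obtain ⟨β, hβN, hβk⟩ := exists_free pc (y k) (hN _)
  by_cases hβx : free pc β x
  · -- Case A: rotate fully and color with β
    have hfx : free (rotate pc (le_refl k) F) β x := rot_free_x pc (le_refl k) F hβx
    have hfyk : free (rotate pc (le_refl k) F) β (y k) := rot_free_yr pc (le_refl k) F hβk
    refine ⟨setEdge (rotate pc (le_refl k) F) x (y k) (F.adj k le_rfl) β hβN hfx hfyk,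
      ?_⟩
    have := support_after pc (le_refl k) F (rotate pc (le_refl k) F) (fun e => Iff.rfl)
      _ (setEdge_support (rotate pc (le_refl k) F) x (y k) (F.adj k le_rfl) β hβN hfx hfyk)
    rw [hy0] at this
    exact this
  · -- Case B
    have hβpres : ∃ z, pc.col s(x, z) = some β := by
      by_contra hcon
      push_neg at hcon
      exact hβx (fun b => hcon b)
    obtain ⟨z, hz⟩ := hβpres
    have hαβ : α ≠ β := by
      intro hcon
      exact hαx z (by rw [hcon]; exact hz)
    -- find j with y j colored β
    obtain ⟨j, hj1, hjk, hyj⟩ : ∃ j, 1 ≤ j ∧ j ≤ k ∧ pc.col s(x, y j) = some β := by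
      by_cases hzin : ∃ i, i ≤ k ∧ y i = z
      · obtain ⟨i, hik, hiz⟩ := hzin
        have hcolβ : pc.col s(x, y i) = some β := by rw [hiz]; exact hz
        have hi1 : 1 ≤ i := by
          rcases Nat.eq_zero_or_pos i with h0 | h0
          · rw [h0, hy0] at hcolβ
            rw [hnone] at hcolβ
            exact absurd hcolβ (by simp)
          · exact h0
        exact ⟨i, hi1, hik, hcolβ⟩
      · exfalso
        push_neg at hzin
        apply hmax
        refine ⟨fun i => if i ≤ k then y i else z, by simp [hy0], ?_, ?_, ?_, ?_⟩
        · intro i hi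
          by_cases hik : i ≤ k
          · simp only [hik, if_true]; exact F.adj i hik
          · simp only [hik, if_false]
            exact H.mem_edgeSet.1 (pc.mem_edge _ (by rw [hz]; simp))
        · intro i hi j' hj' hij
          by_cases hik : i ≤ k <;> by_cases hjk2 : j' ≤ k <;>
            simp only [hik, hjk2, if_true, if_false] at hij
          · exact F.inj i hik j' hjk2 hij
          · exact absurd hij (hzin i hik)
          · exact absurd hij.symm (hzin j' hjk2)
          · omega
        · intro i hi1 hi
          by_cases hik : i ≤ k
          · simp only [hik, if_true]; exact F.colored i hi1 hik
          · simp only [hik, if_false]; rw [hz]; simp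
        · intro i c hi hcol
          by_cases hik : i < k
          · have h1 : i ≤ k := by omega
            have h2 : i + 1 ≤ k := by omega
            simp only [h1, h2, if_true] at hcol ⊢
            exact F.fan i c hik hcol
          · have h1 : i = k := by omega
            have h2 : ¬ (i + 1 ≤ k) := by omega
            rw [if_neg h2, hz] at hcol
            have hcβ : c = β := (Option.some_inj.mp hcol).symm
            have h3 : i ≤ k := by omega
            rw [if_pos h3, h1, hcβ]
            exact hβk
    have hjltk : j < k := by
      rcases Nat.lt_or_ge j k with h | h
      · exact h
      · exfalso
        have : j = k := by omega
        rw [this] at hyj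
        exact hβk x (by rw [Sym2.eq_swap]; exact hyj)
    -- full rotation R
    have hRα : free (rotate pc (le_refl k) F) α x := rot_free_x pc (le_refl k) F hαx
    have hRβk : free (rotate pc (le_refl k) F) β (y k) := rot_free_yr pc (le_refl k) F hβk
    have hRβj : (rotate pc (le_refl k) F).col s(x, y (j-1)) = some β := by
      rw [rotate_eval_lt pc (le_refl k) F (show j - 1 < k by omega)]
      have : j - 1 + 1 = j := by omega
      rw [this]; exact hyj
    by_cases hreach : (kgraph (rotate pc (le_refl k) F) α β).Reachable (y k) x
    · -- hard case: rotate to j-1 instead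
      have hrk : j - 1 ≤ k := by omega
      have hR'α : free (rotate pc hrk F) α x := rot_free_x pc hrk F hαx
      have hfree_yjm1 : free pc β (y (j-1)) := by
        have := F.fan (j-1) β (show j - 1 < k by omega)
        apply this
        have h : j - 1 + 1 = j := by omega
        rw [h]; exact hyj
      have hR'βfree : free (rotate pc hrk F) β (y (j-1)) := rot_free_yr pc hrk F hfree_yjm1
      have hR'βj : (rotate pc hrk F).col s(x, y j) = some β := by
        rw [rotate_other pc hrk F]
        · exact hyj
        · intro i hi hcon
          have := F.inj j hjk i (by omega) (Sym2.congr_right.mp hcon)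
          omega
      have hnr : ¬ (kgraph (rotate pc hrk F) α β).Reachable x (y (j-1)) := by
        intro hre'
        -- the x-free α/β graph of the original coloring
        set BB : SimpleGraph V := {
          Adj := fun u w => u ≠ x ∧ w ≠ x ∧ u ≠ w ∧
            (pc.col s(u, w) = some α ∨ pc.col s(u, w) = some β)
          symm := by
            constructor; intro u w ⟨h1, h2, h3, h4⟩
            exact ⟨h2, h1, h3.symm, by rwa [Sym2.eq_swap]⟩
          loopless := ⟨fun u h => h.2.2.1 rfl⟩ } with hBB
        letI : DecidableRel BB.Adj := fun u w => Classical.dec _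
        have hyne : ∀ i, i ≤ k → y i ≠ x := fun i hi => (F.adj i hi).ne'
        have hiffR : ∀ u w, u ≠ x → w ≠ x →
            ((kgraph (rotate pc (le_refl k) F) α β).Adj u w ↔ BB.Adj u w) := by
          intro u w hu hw
          constructor
          · rintro ⟨hcol, hne⟩
            rw [rotate_nonx pc (le_refl k) F hu hw] at hcol
            exact ⟨hu, hw, hne, hcol⟩
          · rintro ⟨_, _, hne, hcol⟩
            exact ⟨by rwa [rotate_nonx pc (le_refl k) F hu hw], hne⟩
        have hiffR' : ∀ u w, u ≠ x → w ≠ x →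
            ((kgraph (rotate pc hrk F) α β).Adj u w ↔ BB.Adj u w) := by
          intro u w hu hw
          constructor
          · rintro ⟨hcol, hne⟩
            rw [rotate_nonx pc hrk F hu hw] at hcol
            exact ⟨hu, hw, hne, hcol⟩
          · rintro ⟨_, _, hne, hcol⟩
            exact ⟨by rwa [rotate_nonx pc hrk F hu hw], hne⟩
        have huniqR : ∀ b, (kgraph (rotate pc (le_refl k) F) α β).Adj x b → b = y (j-1) := by
          rintro b ⟨hcol, hne⟩
          rcases hcol with hcol | hcol
          · exact absurd hcol (hRα b)
          · exact PC.some_inj _ hcol hRβj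
        have huniqR' : ∀ b, (kgraph (rotate pc hrk F) α β).Adj x b → b = y j := by
          rintro b ⟨hcol, hne⟩
          rcases hcol with hcol | hcol
          · exact absurd hcol (hR'α b)
          · exact PC.some_inj _ hcol hR'βj
        have reach1 : BB.Reachable (y (j-1)) (y k) :=
          reach_from_x _ BB x (y (j-1)) hiffR huniqR hreach.symm
            (hyne k le_rfl)
        have reach2 : BB.Reachable (y j) (y (j-1)) :=
          reach_from_x _ BB x (y j) hiffR' huniqR' hre'
            (hyne (j-1) (by omega))
        -- degree bounds in BB
        have hdeg2 : ∀ a, BB.degree a ≤ 2 := by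
          intro a
          by_contra hcon
          push_neg at hcon
          rw [← SimpleGraph.card_neighborFinset_eq_degree, ] at hcon
          rw [show (2 : ℕ) < (BB.neighborFinset a).card ↔
            2 < (BB.neighborFinset a).card from Iff.rfl, Finset.two_lt_card] at hcon
          obtain ⟨b, hb, c, hc, d, hd, hbc, hbd, hcd⟩ := hcon
          rw [SimpleGraph.mem_neighborFinset] at hb hc hd
          have hcb := hb.2.2.2
          have hcc := hc.2.2.2
          have hcd' := hd.2.2.2
          rcases hcb with h1 | h1 <;> rcases hcc with h2 | h2 <;> rcases hcd' with h3 | h3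
          · exact hbc (PC.some_inj pc h1 h2)
          · exact hbc (PC.some_inj pc h1 h2)
          · exact hbd (PC.some_inj pc h1 h3)
          · exact hcd (PC.some_inj pc h2 h3)
          · exact hcd (PC.some_inj pc h2 h3)
          · exact hbd (PC.some_inj pc h1 h3)
          · exact hbc (PC.some_inj pc h1 h2)
          · exact hbc (PC.some_inj pc h1 h2)
        have hdeg1 : ∀ a, free pc β a → BB.degree a ≤ 1 := by
          intro a hfree
          by_contra hcon
          push_neg at hcon
          rw [← SimpleGraph.card_neighborFinset_eq_degree, Finset.one_lt_card] at hcon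
          obtain ⟨b, hb, c, hc, hbc⟩ := hcon
          rw [SimpleGraph.mem_neighborFinset] at hb hc
          rcases hb.2.2.2 with h1 | h1
          · rcases hc.2.2.2 with h2 | h2
            · exact hbc (PC.some_inj pc h1 h2)
            · exact hfree c h2
          · exact hfree b h1
        have hfree_yj : free pc β (y j) → False := fun h => h x (by rw [Sym2.eq_swap]; exact hyj)
        have hdeg_yj : BB.degree (y j) ≤ 1 := by
          by_contra hcon
          push_neg at hcon
          rw [← SimpleGraph.card_neighborFinset_eq_degree, Finset.one_lt_card] at hcon
          obtain ⟨b, hb, c, hc, hbc⟩ := hcon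
          rw [SimpleGraph.mem_neighborFinset] at hb hc
          have hxcol : pc.col s(y j, x) = some β := by rw [Sym2.eq_swap]; exact hyj
          rcases hb.2.2.2 with h1 | h1
          · rcases hc.2.2.2 with h2 | h2
            · exact hbc (PC.some_inj pc h1 h2)
            · exact hc.2.1 (PC.some_inj pc h2 hxcol)
          · exact hb.2.1 (PC.some_inj pc h1 hxcol)
        have hd1 : BB.degree (y (j-1)) ≤ 1 := hdeg1 _ hfree_yjm1
        have hd2 : BB.degree (y k) ≤ 1 := hdeg1 _ hβk
        have hne1 : y (j-1) ≠ y k := by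
          intro hcon
          have := F.inj (j-1) (by omega) k le_rfl hcon
          omega
        have hne2 : y (j-1) ≠ y j := by
          intro hcon
          have := F.inj (j-1) (by omega) j hjk hcon
          omega
        have hne3 : y k ≠ y j := by
          intro hcon
          have := F.inj k le_rfl j hjk hcon
          omega
        exact path3 BB hdeg2 hd1 hd2 hdeg_yj hne1 hne2 hne3
          reach1 reach2.symm
      -- swap the component of x in R' and color x–y(j-1) with β
      have hSβx : free (kswap (rotate pc hrk F) α β x hαN hβN hαβ) β x :=
        kswap_free₁ (rotate pc hrk F) α β x hαN hβN hαβ (SimpleGraph.Reachable.refl x) hR'α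
      have hSβy : free (kswap (rotate pc hrk F) α β x hαN hβN hαβ) β (y (j-1)) := by
        intro b hcon
        rw [kswap_col, scol_eval_unreach _ α β x hnr] at hcon
        exact hR'βfree b hcon
      refine ⟨setEdge (kswap (rotate pc hrk F) α β x hαN hβN hαβ) x (y (j-1))
        (F.adj (j-1) (by omega)) β hβN hSβx hSβy, ?_⟩
      have := support_after pc hrk F (kswap (rotate pc hrk F) α β x hαN hβN hαβ)
        (kswap_support _ α β x hαN hβN hαβ)
        _ (setEdge_support _ x (y (j-1)) (F.adj (j-1) (by omega)) β hβN hSβx hSβy)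
      rw [hy0] at this
      exact this
    · -- easy case: swap the component of y k in R and color x–y k with α
      have hSαyk : free (kswap (rotate pc (le_refl k) F) α β (y k) hαN hβN hαβ) α (y k) :=
        kswap_free₂ _ α β (y k) hαN hβN hαβ (SimpleGraph.Reachable.refl _) hRβk
      have hSαx : free (kswap (rotate pc (le_refl k) F) α β (y k) hαN hβN hαβ) α x := by
        intro b hcon
        rw [kswap_col, scol_eval_unreach _ α β (y k) hreach] at hcon
        exact hRα b hcon
      refine ⟨setEdge (kswap (rotate pc (le_refl k) F) α β (y k) hαN hβN hαβ) x (y k)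
        (F.adj k le_rfl) α hαN hSαx hSαyk, ?_⟩
      have := support_after pc (le_refl k) F
        (kswap (rotate pc (le_refl k) F) α β (y k) hαN hβN hαβ)
        (kswap_support _ α β (y k) hαN hβN hαβ)
        _ (setEdge_support _ x (y k) (F.adj k le_rfl) α hαN hSαx hSαyk)
      rw [hy0] at this
      exact this

end Extend

section Global

variable {H : SimpleGraph V} {N : ℕ}

lemma vizing_coloring [DecidableRel H.Adj] (hN : ∀ v, H.degree v < N) :
    ∃ pc : PC H N, ∀ e ∈ H.edgeSet, pc.col e ≠ none := by
  classical
  suffices h : ∀ m (pc : PC H N),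
      (H.edgeFinset.filter (fun e => pc.col e = none)).card = m →
      ∃ pc' : PC H N, ∀ e ∈ H.edgeSet, pc'.col e ≠ none by
    exact h _ ⟨fun _ => none, by simp, by simp, by simp⟩ rfl
  intro m
  induction m using Nat.strong_induction_on with
  | _ m ih =>
    intro pc hcard
    rcases Nat.eq_zero_or_pos m with hm | hm
    · refine ⟨pc, ?_⟩
      intro e he
      intro hcon
      have hmem : e ∈ H.edgeFinset.filter (fun e => pc.col e = none) := by
        rw [Finset.mem_filter]
        exact ⟨SimpleGraph.mem_edgeFinset.2 he, hcon⟩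
      rw [hm] at hcard
      rw [Finset.card_eq_zero] at hcard
      rw [hcard] at hmem
      exact absurd hmem (Finset.notMem_empty e)
    · have hne : (H.edgeFinset.filter (fun e => pc.col e = none)).Nonempty := by
        rw [← Finset.card_pos, hcard]; exact hm
      obtain ⟨e, he⟩ := hne
      rw [Finset.mem_filter] at he
      obtain ⟨heF, heN⟩ := he
      induction e with
      | _ x y₀ =>
        have hadj : H.Adj x y₀ := SimpleGraph.mem_edgeFinset.1 heF
        obtain ⟨pc', h1, h2⟩ := extend pc hN hadj heN
        refine ih (m - 1) (by omega) pc' ?_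
        have hfe : H.edgeFinset.filter (fun e => pc'.col e = none)
            = (H.edgeFinset.filter (fun e => pc.col e = none)).erase s(x, y₀) := by
          ext e'
          rw [Finset.mem_erase, Finset.mem_filter, Finset.mem_filter]
          constructor
          · rintro ⟨hm1, hm2⟩
            have hne' : e' ≠ s(x, y₀) := by
              intro hcon
              rw [hcon] at hm2
              exact h1 hm2
            refine ⟨hne', hm1, ?_⟩
            by_contra hcon
            exact ((h2 e' hne').2 hcon) hm2
          · rintro ⟨hne', hm1, hm2⟩
            refine ⟨hm1, ?_⟩
            by_contra hcon
            exact ((h2 e' hne').1 hcon) hm2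
        rw [hfe, Finset.card_erase_of_mem (by rw [Finset.mem_filter]; exact ⟨heF, heN⟩), hcard]

/-- Vizing-type matching bound: a graph with max degree `≤ D` has a matching
of size at least `|E|/(D+1)`. -/
lemma exists_big_matching [DecidableRel H.Adj] (D : ℕ) (hD : ∀ v, H.degree v ≤ D) :
    ∃ M : Finset (Sym2 V), (↑M ⊆ H.edgeSet) ∧
      (M : Set (Sym2 V)).Pairwise (fun e f => ∀ v, v ∈ e → v ∉ f) ∧
      H.edgeFinset.card ≤ (D + 1) * M.card := by
  classical
  obtain ⟨pc, hall⟩ := vizing_coloring (N := D + 1)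
    (fun v => lt_of_le_of_lt (hD v) (by omega))
  set f : Sym2 V → ℕ := fun e => (pc.col e).getD 0 with hf
  have hflt : ∀ e ∈ H.edgeFinset, f e ∈ Finset.range (D + 1) := by
    intro e he
    rw [Finset.mem_range]
    have h1 := hall e (SimpleGraph.mem_edgeFinset.1 he)
    obtain ⟨c, hc⟩ := Option.ne_none_iff_exists'.mp h1
    rw [hf]; simp only [hc, Option.getD_some]
    exact pc.lt e c hc
  have hcards := Finset.card_eq_sum_card_fiberwise hflt
  obtain ⟨c, _, hcmax⟩ := Finset.exists_max_image (Finset.range (D + 1))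
    (fun c => (H.edgeFinset.filter (fun e => f e = c)).card)
    ⟨0, by simp⟩
  refine ⟨H.edgeFinset.filter (fun e => f e = c), ?_, ?_, ?_⟩
  · intro e he
    simp only [Finset.coe_filter, Set.mem_setOf_eq] at he
    exact SimpleGraph.mem_edgeFinset.1 he.1
  · intro e₁ he₁ e₂ he₂ hne v hv1 hv2
    simp only [Finset.coe_filter, Set.mem_setOf_eq] at he₁ he₂
    -- e₁ = s(v, b₁), e₂ = s(v, b₂)
    obtain ⟨b₁, hb₁⟩ := Sym2.mem_iff_exists.mp hv1
    obtain ⟨b₂, hb₂⟩ := Sym2.mem_iff_exists.mp hv2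
    have hbne : b₁ ≠ b₂ := by
      intro hcon
      rw [hcon] at hb₁
      exact hne (hb₁.trans hb₂.symm)
    have h1 : pc.col s(v, b₁) ≠ none := by
      rw [← hb₁]; exact hall e₁ (SimpleGraph.mem_edgeFinset.1 he₁.1)
    have hprop := pc.proper v b₁ b₂ hbne h1
    apply hprop
    obtain ⟨c₁, hc₁⟩ := Option.ne_none_iff_exists'.mp h1
    have h2 : pc.col s(v, b₂) ≠ none := by
      rw [← hb₂]; exact hall e₂ (SimpleGraph.mem_edgeFinset.1 he₂.1)
    obtain ⟨c₂, hc₂⟩ := Option.ne_none_iff_exists'.mp h2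
    rw [hc₁, hc₂]
    have hv1' : f e₁ = c₁ := by rw [← hb₁] at hc₁; rw [hf]; simp [hc₁]
    have hv2' : f e₂ = c₂ := by rw [← hb₂] at hc₂; rw [hf]; simp [hc₂]
    have : c₁ = c₂ := by
      rw [← hv1', ← hv2', he₁.2, he₂.2]
    rw [this]
  · rw [hcards]
    calc ∑ b ∈ Finset.range (D + 1), (H.edgeFinset.filter (fun e => f e = b)).card
        ≤ ∑ _b ∈ Finset.range (D + 1), (H.edgeFinset.filter (fun e => f e = c)).card :=
          Finset.sum_le_sum (fun b hb => hcmax b hb)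
      _ = (D + 1) * (H.edgeFinset.filter (fun e => f e = c)).card := by
          rw [Finset.sum_const, Finset.card_range, smul_eq_mul]

end Global
end VizingAux

set_option linter.unusedSectionVars false
set_option maxHeartbeats 1000000

namespace PLAnalysis
open Real

lemma summable_rpow_neg {γ : ℝ} (hγ : 2 < γ) : Summable (fun u : ℕ => (u:ℝ) ^ (-γ)) :=
  Real.summable_nat_rpow.2 (by linarith)

lemma summable_rpow_one_sub {γ : ℝ} (hγ : 2 < γ) : Summable (fun u : ℕ => (u:ℝ) ^ (1-γ)) :=
  Real.summable_nat_rpow.2 (by linarith)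

/-- the shifted tsum as an indicator tsum -/
lemma shift_tsum (h : ℕ → ℝ) (h0 : ∀ u, 0 ≤ h u) (s : ℕ) :
    ∑' j : ℕ, h (s + j) = ∑' u : ℕ, (if s ≤ u then h u else 0) := by
  have hinj : Function.Injective (fun j : ℕ => s + j) := fun a b hab =>
    Nat.add_left_cancel hab
  have := Function.Injective.tsum_eq hinj (f := fun u => if s ≤ u then h u else 0) ?_
  · rw [← this]
    congr 1
    funext j
    rw [if_pos (by omega)]
  · intro u hu
    rw [Function.mem_support] at hu
    by_cases hsu : s ≤ u
    · exact ⟨u - s, by simp only; omega⟩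
    · exact absurd (if_neg hsu) hu

lemma mono_term {γ : ℝ} (hγ : 2 < γ) {u : ℕ} (hu : 2 ≤ u) :
    ((u:ℝ)) ^ (1 - γ) ≤ (((u:ℝ) - 1) ^ (2 - γ) - (u:ℝ) ^ (2 - γ)) / (γ - 2) := by
  have hσ : (0:ℝ) < γ - 2 := by linarith
  have ht0 : (0:ℝ) < (u:ℝ) - 1 := by
    have : (2:ℝ) ≤ (u:ℝ) := by exact_mod_cast hu
    linarith
  have htu : (0:ℝ) < (u:ℝ) := by linarith
  set r : ℝ := (u:ℝ) / ((u:ℝ) - 1) with hr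
  have hrpos : 0 < r := by positivity
  have hlog : 1 / (u:ℝ) ≤ Real.log r := by
    have h := Real.log_le_sub_one_of_pos (x := ((u:ℝ) - 1)/(u:ℝ)) (by positivity)
    have h2 : Real.log (((u:ℝ) - 1)/(u:ℝ)) = - Real.log r := by
      rw [← Real.log_inv]
      congr 1
      rw [hr]
      field_simp
    rw [h2] at h
    have h3 : ((u:ℝ) - 1)/(u:ℝ) - 1 = - (1/(u:ℝ)) := by rw [sub_div, div_self htu.ne']; ring
    rw [h3] at h
    linarith
  have hpow : 1 + (γ - 2)/(u:ℝ) ≤ r ^ (γ - 2) := by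
    rw [Real.rpow_def_of_pos hrpos, mul_comm]
    have h1 : (γ - 2)/(u:ℝ) ≤ (γ - 2) * Real.log r := by
      rw [div_eq_mul_one_div]
      exact mul_le_mul_of_nonneg_left hlog (by linarith)
    have h2 := Real.add_one_le_exp ((γ - 2) * Real.log r)
    linarith
  have hkey : ((u:ℝ) - 1) ^ (2 - γ) = (u:ℝ) ^ (2 - γ) * r ^ (γ - 2) := by
    have e2 : (u:ℝ) ^ (2 - γ) * (u:ℝ) ^ (γ - 2) = 1 := by
      rw [← Real.rpow_add htu, show (2 - γ) + (γ - 2) = 0 by ring, Real.rpow_zero]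
    rw [hr, Real.div_rpow htu.le ht0.le, mul_div_assoc']
    rw [e2, one_div, ← Real.rpow_neg ht0.le, show -(γ - 2) = 2 - γ by ring]
  have hfinal : (γ - 2) * (u:ℝ) ^ (1 - γ) ≤ ((u:ℝ) - 1) ^ (2 - γ) - (u:ℝ) ^ (2 - γ) := by
    rw [hkey]
    have e1 : (u:ℝ) ^ (2 - γ) * r ^ (γ - 2) - (u:ℝ) ^ (2 - γ)
        = (u:ℝ) ^ (2 - γ) * (r ^ (γ - 2) - 1) := by ring
    rw [e1]
    have e2 : (u:ℝ) ^ (2 - γ) * ((γ - 2)/(u:ℝ)) = (γ - 2) * (u:ℝ) ^ (1 - γ) := by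
      rw [div_eq_mul_inv, ← Real.rpow_neg_one (u:ℝ)]
      rw [show (u:ℝ) ^ (2 - γ) * ((γ - 2) * (u:ℝ) ^ (-1:ℝ))
          = (γ - 2) * ((u:ℝ) ^ (2 - γ) * (u:ℝ) ^ (-1:ℝ)) by ring]
      rw [← Real.rpow_add htu, show (2 - γ) + (-1:ℝ) = 1 - γ by ring]
    calc (γ - 2) * (u:ℝ) ^ (1 - γ) = (u:ℝ) ^ (2 - γ) * ((γ - 2)/(u:ℝ)) := e2.symm
      _ ≤ (u:ℝ) ^ (2 - γ) * (r ^ (γ - 2) - 1) := by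
          apply mul_le_mul_of_nonneg_left _ (Real.rpow_nonneg (le_of_lt htu) _)
          linarith
  rw [le_div_iff₀ hσ]
  linarith

/-- telescoping tail bound: `∑_{u ≥ t} u^(1-γ) ≤ (t-1)^(2-γ)/(γ-2)` for `t ≥ 2`. -/
lemma tail_sum_le {γ : ℝ} (hγ : 2 < γ) (t : ℕ) (ht : 2 ≤ t) :
    ∑' j : ℕ, ((t + j : ℕ) : ℝ) ^ (1 - γ) ≤ ((t:ℝ) - 1) ^ (2 - γ) / (γ - 2) := by
  have hσ : (0:ℝ) < γ - 2 := by linarith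
  set a : ℕ → ℝ := fun m => ((t - 1 + m : ℕ) : ℝ) ^ (2 - γ) / (γ - 2) with ha
  have hterm : ∀ j : ℕ, ((t + j : ℕ) : ℝ) ^ (1 - γ) ≤ a j - a (j + 1) := by
    intro j
    have hu : 2 ≤ t + j := by omega
    have h := mono_term hγ hu
    have c1 : ((t + j : ℕ) : ℝ) - 1 = ((t - 1 + j : ℕ) : ℝ) := by
      push_cast [Nat.cast_sub (show 1 ≤ t by omega)]
      ring
    have c2 : (t - 1 + (j + 1) : ℕ) = (t + j : ℕ) := by omega
    rw [ha]
    simp only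
    rw [c2, ← c1]
    rw [div_sub_div_same]
    exact h
  have htend : Filter.Tendsto a Filter.atTop (nhds 0) := by
    rw [ha]
    have h1 : Filter.Tendsto (fun m : ℕ => ((t - 1 + m : ℕ) : ℝ)) Filter.atTop Filter.atTop := by
      apply Filter.tendsto_atTop_mono (f := fun m : ℕ => (m : ℝ))
      · intro m
        push_cast
        have h0 : (0:ℝ) ≤ ((t - 1 : ℕ):ℝ) := Nat.cast_nonneg _
        linarith
      · exact tendsto_natCast_atTop_atTop
    have h2 : Filter.Tendsto (fun x : ℝ => x ^ (2 - γ)) Filter.atTop (nhds 0) := by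
      rw [show (2 - γ) = -(γ - 2) by ring]
      exact tendsto_rpow_neg_atTop hσ
    have h3 := h2.comp h1
    have : (fun m : ℕ => ((t - 1 + m : ℕ) : ℝ) ^ (2 - γ) / (γ - 2))
        = fun m => (((fun x : ℝ => x ^ (2 - γ)) ∘ (fun m : ℕ => ((t - 1 + m : ℕ) : ℝ))) m) / (γ - 2) := rfl
    rw [this]
    simpa using h3.div_const (γ - 2)
  have hsum : HasSum (fun j => a j - a (j + 1)) (a 0) := by
    have hnn : ∀ j, 0 ≤ a j - a (j + 1) := by
      intro j
      have := hterm j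
      have hpos : (0:ℝ) ≤ ((t + j : ℕ) : ℝ) ^ (1 - γ) := Real.rpow_nonneg (by positivity) _
      linarith
    rw [hasSum_iff_tendsto_nat_of_nonneg hnn]
    have hps : ∀ n : ℕ, ∑ i ∈ Finset.range n, (a i - a (i + 1)) = a 0 - a n :=
      fun n => Finset.sum_range_sub' a n
    simp_rw [hps]
    simpa using (tendsto_const_nhds.sub htend)
  have hsummable : Summable (fun j : ℕ => ((t + j : ℕ) : ℝ) ^ (1 - γ)) :=
    Summable.of_nonneg_of_le (fun j => Real.rpow_nonneg (by positivity) _) hterm hsum.summable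
  have := Summable.tsum_le_tsum hterm hsummable hsum.summable
  rw [hsum.tsum_eq] at this
  refine le_trans this ?_
  rw [ha]
  simp only
  rw [show (t - 1 + 0 : ℕ) = t - 1 by omega]
  have : ((t - 1 : ℕ) : ℝ) = (t : ℝ) - 1 := by
    push_cast [Nat.cast_sub (show 1 ≤ t by omega)]
    ring
  rw [this]


lemma sum_swap_le {γ : ℝ} (hγ : 2 < γ) (n t : ℕ) (ht : 1 ≤ t) :
    ∑ i ∈ Finset.Icc 1 n, (∑' j : ℕ, ((max i t + j : ℕ) : ℝ) ^ (-γ)) ≤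
      ∑' j : ℕ, ((t + j : ℕ) : ℝ) ^ (1 - γ) := by
  have hg0 : ∀ u : ℕ, (0:ℝ) ≤ (u:ℝ) ^ (-γ) := fun u => Real.rpow_nonneg (Nat.cast_nonneg u) _
  have hrw : ∀ i ∈ Finset.Icc 1 n, (∑' j : ℕ, ((max i t + j : ℕ) : ℝ) ^ (-γ))
      = ∑' u : ℕ, (if max i t ≤ u then (u:ℝ) ^ (-γ) else 0) := by
    intro i _
    exact shift_tsum (fun u => (u:ℝ) ^ (-γ)) hg0 (max i t)
  rw [Finset.sum_congr rfl hrw]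
  have hsummg : ∀ s : ℕ, Summable (fun u : ℕ => if s ≤ u then (u:ℝ) ^ (-γ) else 0) := by
    intro s
    apply Summable.of_nonneg_of_le _ _ (summable_rpow_neg hγ)
    · intro u; split_ifs; exacts [hg0 u, le_rfl]
    · intro u; split_ifs; exacts [le_rfl, hg0 u]
  rw [← Summable.tsum_finsetSum (fun i _ => hsummg (max i t))]
  have hble : ∀ u : ℕ, (∑ i ∈ Finset.Icc 1 n, (if max i t ≤ u then (u:ℝ) ^ (-γ) else 0))
      ≤ (if t ≤ u then (u:ℝ) ^ (1-γ) else 0) := by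
    intro u
    by_cases htu : t ≤ u
    · rw [if_pos htu]
      have h1 : ∀ i ∈ Finset.Icc 1 n, (if max i t ≤ u then (u:ℝ) ^ (-γ) else 0)
          ≤ (if i ≤ u then (u:ℝ) ^ (-γ) else 0) := by
        intro i _
        split_ifs with h2 h3
        · exact le_rfl
        · exact absurd (le_trans (le_max_left i t) h2) h3
        · exact hg0 u
        · exact le_rfl
      refine le_trans (Finset.sum_le_sum h1) ?_
      rw [← Finset.sum_filter]
      have hcard : ((Finset.Icc 1 n).filter (fun i => i ≤ u)).card ≤ u := by
        have hsub : (Finset.Icc 1 n).filter (fun i => i ≤ u) ⊆ Finset.Icc 1 u := by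
          intro i hi
          simp only [Finset.mem_filter, Finset.mem_Icc] at hi ⊢
          omega
        calc ((Finset.Icc 1 n).filter (fun i => i ≤ u)).card
            ≤ (Finset.Icc 1 u).card := Finset.card_le_card hsub
          _ = u := by rw [Nat.card_Icc]; omega
      rw [Finset.sum_const, nsmul_eq_mul]
      have hupos : (0:ℝ) < (u:ℝ) := by
        have h1u : 1 ≤ u := le_trans ht htu
        exact_mod_cast Nat.pos_of_ne_zero (by omega)
      calc (((Finset.Icc 1 n).filter (fun i => i ≤ u)).card : ℝ) * (u:ℝ) ^ (-γ)
          ≤ (u:ℝ) * (u:ℝ) ^ (-γ) := by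
            apply mul_le_mul_of_nonneg_right _ (hg0 u)
            exact_mod_cast hcard
        _ = (u:ℝ) ^ (1-γ) := by
            rw [show (1-γ) = 1 + (-γ) by ring, Real.rpow_add hupos, Real.rpow_one]
    · rw [if_neg htu]
      apply le_of_eq
      apply Finset.sum_eq_zero
      intro i _
      rw [if_neg (fun hcon => htu (le_trans (le_max_right i t) hcon))]
  have hsum1 : Summable (fun u : ℕ => ∑ i ∈ Finset.Icc 1 n,
      (if max i t ≤ u then (u:ℝ) ^ (-γ) else 0)) :=
    summable_sum (fun i _ => hsummg (max i t))
  have hsum2 : Summable (fun u : ℕ => if t ≤ u then (u:ℝ) ^ (1-γ) else 0) := by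
    apply Summable.of_nonneg_of_le _ _ (summable_rpow_one_sub hγ)
    · intro u; split_ifs
      · exact Real.rpow_nonneg (Nat.cast_nonneg u) _
      · exact le_rfl
    · intro u; split_ifs
      · exact le_rfl
      · exact Real.rpow_nonneg (Nat.cast_nonneg u) _
  refine le_trans (Summable.tsum_le_tsum hble hsum1 hsum2) ?_
  rw [← shift_tsum (fun u => (u:ℝ) ^ (1-γ))
    (fun u => Real.rpow_nonneg (Nat.cast_nonneg u) _) t]

end PLAnalysis

/-- If the degree sequence of `G` is power-law distribution-bounded with parameters
`γ > 2` and `C > 0` (i.e. `D_{≥i}(G) ≤ C·n·ζ(γ,i)` for all `i ≥ 1`) and `|E(G)| ≥ n/2`,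
then `ν(G) ≥ n · max_{2 ≤ q < n} (1/2 − (C/(γ−2))·(q−1)^(2−γ))/(q+1)`. -/
theorem powerlaw_matching_lower_bound {V : Type*} [Fintype V] [DecidableEq V]
    (G : SimpleGraph V) [DecidableRel G.Adj]
    (γ C : ℝ) (hγ : 2 < γ) (hC : 0 < C)
    (n : ℕ) (hn : n = Fintype.card V)
    (hpl : ∀ i : ℕ, 1 ≤ i →
      ((Finset.univ.filter fun v => i ≤ G.degree v).card : ℝ) ≤
        C * (n : ℝ) * ∑' j : ℕ, ((i + j : ℕ) : ℝ) ^ (-γ))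
    (hE : (n : ℝ) / 2 ≤ (G.edgeFinset.card : ℝ)) :
    ∃ M : Finset (Sym2 V), IsMatchingFinset G M ∧
      ∀ q : ℕ, 2 ≤ q → q < n →
        (n : ℝ) * ((1 / 2 - (C / (γ - 2)) * ((q : ℝ) - 1) ^ (2 - γ)) / ((q : ℝ) + 1))
          ≤ (M.card : ℝ) := by
  classical
  -- take a maximum matching
  obtain ⟨M, hMmem, hMmax⟩ := Finset.exists_max_image
    (Finset.univ.filter (fun M : Finset (Sym2 V) => IsMatchingFinset G M)) Finset.card
    ⟨∅, Finset.mem_filter.2 ⟨Finset.mem_univ _, by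
      constructor
      · simp
      · simp [Set.pairwise_empty]⟩⟩
  have hMmatch : IsMatchingFinset G M := (Finset.mem_filter.1 hMmem).2
  refine ⟨M, hMmatch, ?_⟩
  intro q hq2 hqn
  have hσ : (0:ℝ) < γ - 2 := by linarith
  -- the low-degree subgraph
  set H : SimpleGraph V := {
    Adj := fun a b => G.Adj a b ∧ G.degree a ≤ q ∧ G.degree b ≤ q
    symm := ⟨fun {a b} h => ⟨h.1.symm, h.2.2, h.2.1⟩⟩
    loopless := ⟨fun a h => G.irrefl h.1⟩ } with hH
  letI : DecidableRel H.Adj := fun a b => Classical.dec _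
  have hHadj : ∀ a b, H.Adj a b ↔ (G.Adj a b ∧ G.degree a ≤ q ∧ G.degree b ≤ q) := by
    intro a b; rw [hH]
  have hHG : H ≤ G := fun a b h => ((hHadj a b).1 h).1
  have hHdeg : ∀ v, H.degree v ≤ q := by
    intro v
    by_cases hv : G.degree v ≤ q
    · have hsub : H.neighborFinset v ⊆ G.neighborFinset v := by
        intro b hb
        rw [SimpleGraph.mem_neighborFinset] at hb ⊢
        exact ((hHadj v b).1 hb).1
      have hcc := Finset.card_le_card hsub
      rw [SimpleGraph.card_neighborFinset_eq_degree,
        SimpleGraph.card_neighborFinset_eq_degree] at hcc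
      omega
    · have hempty : H.neighborFinset v = ∅ := by
        rw [Finset.eq_empty_iff_forall_notMem]
        intro b hb
        rw [SimpleGraph.mem_neighborFinset] at hb
        exact hv ((hHadj v b).1 hb).2.1
      rw [← SimpleGraph.card_neighborFinset_eq_degree, hempty]
      simp
  -- Vizing matching in H
  obtain ⟨M₀, hM₀sub, hM₀pair, hM₀card⟩ := VizingAux.exists_big_matching (H := H) q hHdeg
  have hM₀match : IsMatchingFinset G M₀ :=
    ⟨fun e he => SimpleGraph.edgeSet_mono hHG (hM₀sub he), hM₀pair⟩
  have hM₀M : M₀.card ≤ M.card :=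
    hMmax M₀ (Finset.mem_filter.2 ⟨Finset.mem_univ _, hM₀match⟩)
  -- high-degree vertices
  set S : Finset V := Finset.univ.filter (fun v => q + 1 ≤ G.degree v) with hS
  set T : ℕ := ∑ v ∈ S, G.degree v with hT
  -- edge count
  have hcount : G.edgeFinset.card ≤ H.edgeFinset.card + T := by
    have hsubE : G.edgeFinset ⊆ H.edgeFinset ∪ S.biUnion (fun v => G.incidenceFinset v) := by
      intro e he
      induction e with
      | _ a b =>
        have hadj : G.Adj a b := SimpleGraph.mem_edgeFinset.1 he
        by_cases hq : G.degree a ≤ q ∧ G.degree b ≤ q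
        · exact Finset.mem_union_left _
            (SimpleGraph.mem_edgeFinset.2 ((hHadj a b).2 ⟨hadj, hq.1, hq.2⟩))
        · apply Finset.mem_union_right
          rw [Finset.mem_biUnion]
          rcases not_and_or.mp hq with h | h
          · refine ⟨a, ?_, ?_⟩
            · rw [hS, Finset.mem_filter]; exact ⟨Finset.mem_univ _, by omega⟩
            · rw [SimpleGraph.mem_incidenceFinset, SimpleGraph.mem_incidenceSet]
              exact hadj
          · refine ⟨b, ?_, ?_⟩
            · rw [hS, Finset.mem_filter]; exact ⟨Finset.mem_univ _, by omega⟩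
            · rw [SimpleGraph.mem_incidenceFinset, Sym2.eq_swap,
                SimpleGraph.mem_incidenceSet]
              exact hadj.symm
    calc G.edgeFinset.card
        ≤ (H.edgeFinset ∪ S.biUnion (fun v => G.incidenceFinset v)).card :=
          Finset.card_le_card hsubE
      _ ≤ H.edgeFinset.card + (S.biUnion (fun v => G.incidenceFinset v)).card :=
          Finset.card_union_le _ _
      _ ≤ H.edgeFinset.card + ∑ v ∈ S, (G.incidenceFinset v).card :=
          Nat.add_le_add_left Finset.card_biUnion_le _
      _ = H.edgeFinset.card + T := by
          rw [hT]
          congr 1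
          exact Finset.sum_congr rfl
            (fun v _ => SimpleGraph.card_incidenceFinset_eq_degree G v)
  -- bound T by the power law
  have hn1 : 1 ≤ n := by omega
  have hdeg_le : ∀ v : V, G.degree v ≤ n := by
    intro v
    rw [hn]
    exact le_of_lt (G.degree_lt_card_verts v)
  have hswap : T = ∑ i ∈ Finset.Icc 1 n, (S.filter (fun v => i ≤ G.degree v)).card := by
    rw [hT]
    have h1 : ∀ v ∈ S, G.degree v
        = ∑ i ∈ Finset.Icc 1 n, (if i ≤ G.degree v then 1 else 0) := by
      intro v _
      rw [← Finset.sum_filter]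
      have hfe : (Finset.Icc 1 n).filter (fun i => i ≤ G.degree v)
          = Finset.Icc 1 (G.degree v) := by
        ext i
        simp only [Finset.mem_filter, Finset.mem_Icc]
        have := hdeg_le v
        omega
      rw [hfe, Finset.sum_const, Nat.card_Icc, smul_eq_mul]
      omega
    rw [Finset.sum_congr rfl h1, Finset.sum_comm]
    refine Finset.sum_congr rfl (fun i _ => ?_)
    rw [← Finset.sum_filter, Finset.sum_const, smul_eq_mul, mul_one]
  have hTbound : (T : ℝ) ≤ C * (n:ℝ) * ∑' j : ℕ, ((q + 1 + j : ℕ) : ℝ) ^ (1 - γ) := by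
    have hterm : ∀ i ∈ Finset.Icc 1 n,
        ((S.filter (fun v => i ≤ G.degree v)).card : ℝ)
          ≤ C * (n:ℝ) * ∑' j : ℕ, ((max i (q+1) + j : ℕ) : ℝ) ^ (-γ) := by
      intro i hi
      rw [Finset.mem_Icc] at hi
      have hfeq : S.filter (fun v => i ≤ G.degree v)
          = Finset.univ.filter (fun v => max i (q+1) ≤ G.degree v) := by
        ext v
        rw [hS]
        simp only [Finset.mem_filter, Finset.mem_univ, true_and, max_le_iff]
        omega
      rw [hfeq]
      exact hpl (max i (q+1)) (by omega)
    calc (T : ℝ) = ∑ i ∈ Finset.Icc 1 n,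
          ((S.filter (fun v => i ≤ G.degree v)).card : ℝ) := by
          rw [hswap]; push_cast; ring
      _ ≤ ∑ i ∈ Finset.Icc 1 n,
            C * (n:ℝ) * ∑' j : ℕ, ((max i (q+1) + j : ℕ) : ℝ) ^ (-γ) :=
          Finset.sum_le_sum hterm
      _ = C * (n:ℝ) * ∑ i ∈ Finset.Icc 1 n,
            ∑' j : ℕ, ((max i (q+1) + j : ℕ) : ℝ) ^ (-γ) := by
          rw [Finset.mul_sum]
      _ ≤ C * (n:ℝ) * ∑' j : ℕ, ((q + 1 + j : ℕ) : ℝ) ^ (1 - γ) := by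
          apply mul_le_mul_of_nonneg_left _ (by positivity)
          exact PLAnalysis.sum_swap_le hγ n (q+1) (by omega)
  -- analysis of the zeta tail
  have hVbound : ∑' j : ℕ, ((q + 1 + j : ℕ) : ℝ) ^ (1 - γ)
      ≤ ((q:ℝ) - 1) ^ (2 - γ) / (γ - 2) := by
    have h1 := PLAnalysis.tail_sum_le hγ (q+1) (by omega)
    have hc : ((q + 1 : ℕ) : ℝ) - 1 = (q : ℝ) := by push_cast; ring
    rw [hc] at h1
    refine le_trans h1 ?_
    have hbase : ((q:ℝ) - 1) ≤ (q:ℝ) := by linarith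
    have hpos : (0:ℝ) < (q:ℝ) - 1 := by
      have h2q : (2:ℝ) ≤ (q:ℝ) := by exact_mod_cast hq2
      linarith
    have hmono := Real.rpow_le_rpow_of_nonpos hpos hbase (by linarith : (2-γ) ≤ 0)
    exact div_le_div_of_nonneg_right hmono hσ.le
  -- put everything together
  have hq1pos : (0:ℝ) < (q:ℝ) + 1 := by positivity
  have hTb2 : (T:ℝ) ≤ (n:ℝ) * (C / (γ - 2)) * ((q:ℝ) - 1) ^ (2 - γ) := by
    refine le_trans hTbound ?_
    calc C * (n:ℝ) * ∑' j : ℕ, ((q + 1 + j : ℕ) : ℝ) ^ (1 - γ)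
        ≤ C * (n:ℝ) * (((q:ℝ) - 1) ^ (2 - γ) / (γ - 2)) :=
          mul_le_mul_of_nonneg_left hVbound (by positivity)
      _ = (n:ℝ) * (C / (γ - 2)) * ((q:ℝ) - 1) ^ (2 - γ) := by ring
  have hcountR : (G.edgeFinset.card : ℝ) ≤ (H.edgeFinset.card : ℝ) + (T:ℝ) := by
    exact_mod_cast hcount
  have hM₀R : (H.edgeFinset.card : ℝ) ≤ ((q:ℝ) + 1) * (M₀.card : ℝ) := by
    have h := hM₀card
    have h2 : (H.edgeFinset.card : ℝ) ≤ ((q + 1) * M₀.card : ℕ) := by exact_mod_cast h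
    push_cast at h2
    linarith
  have hM₀MR : (M₀.card : ℝ) ≤ (M.card : ℝ) := by exact_mod_cast hM₀M
  have hmul : ((q:ℝ)+1) * (M₀.card:ℝ) ≤ ((q:ℝ)+1) * (M.card:ℝ) :=
    mul_le_mul_of_nonneg_left hM₀MR (by positivity)
  have hfinal : (n:ℝ)/2 - (n:ℝ) * (C / (γ - 2)) * ((q:ℝ) - 1) ^ (2 - γ)
      ≤ ((q:ℝ)+1) * (M.card:ℝ) := by linarith
  calc (n:ℝ) * ((1/2 - (C / (γ - 2)) * ((q:ℝ) - 1) ^ (2 - γ))/((q:ℝ)+1))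
      = ((n:ℝ)/2 - (n:ℝ) * (C / (γ - 2)) * ((q:ℝ) - 1) ^ (2 - γ))/((q:ℝ)+1) := by
        ring
    _ ≤ (((q:ℝ)+1) * (M.card:ℝ))/((q:ℝ)+1) :=
        div_le_div_of_nonneg_right hfinal hq1pos.le
    _ = (M.card:ℝ) := by field_simp
end
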